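/- Let n ≥ 1, N, N* ≥ 0 be integers, 0 = p₀ < p₁ < ⋯ < p_{N*} integers, and g, ρ₁, ρ₂, h₁, h₂ > 0 real constants, and let b : ℝⁿ → ℝ be smooth. Suppose ζ, φ_{1,0}, …, φ_{1,N}, φ_{2,0}, …, φ_{2,N*} : ℝⁿ × ℝ → ℝ are smooth functions satisfying the Kakinuma model (with H₁ = h₁ − ζ and H₂ = h₂ + ζ − b). Then the local conservation of energy ∂_t e^K + ∇·f_e^K = 0 holds identically, where e^K = (ρ₁/2) Σ_{i,j=0}^{N} ( (1/(2(i+j)+1)) H₁^{2(i+j)+1} ∇φ_{1,i}·∇φ_{1,j} + (4ij/(2(i+j)−1)) H₁^{2(i+j)−1} φ_{1,i}φ_{1,j} ) + (ρ₂/2) Σ_{i,j=0}^{N*} ( (1/(p_i+p_j+1)) H₂^{p_i+p_j+1} ∇φ_{2,i}·∇φ_{2,j} − (2p_i/(p_i+p_j)) H₂^{p_i+p_j} φ_{2,i} ∇b·∇φ_{2,j} + (p_ip_j/(p_i+p_j−1)) H₂^{p_i+p_j−1} (1+|∇b|²) φ_{2,i}φ_{2,j} ) + (1/2)(ρ₂−ρ₁)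 g ζ², and f_e^K = ρ₁ Σ_{i,j=0}^{N} ( −(1/(2(i+j)+1)) H₁^{2(i+j)+1} ∇φ_{1,j} ) ∂_tφ_{1,i} + ρ₂ Σ_{i,j=0}^{N*} ( −(1/(p_i+p_j+1)) H₂^{p_i+p_j+1} ∇φ_{2,j} + (p_j/(p_i+p_j)) H₂^{p_i+p_j} φ_{2,j} ∇b ) ∂_tφ_{2,i}. -/

import Mathlib

open scoped RealInnerProductSpace

/-- Time derivative `∂ₜ f` of a function of `(x, t)`. -/
noncomputable def pt {n : ℕ} (f : EuclideanSpace ℝ (Fin n) × ℝ → ℝ)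
    (q : EuclideanSpace ℝ (Fin n) × ℝ) : ℝ :=
  deriv (fun s => f (q.1, s)) q.2

/-- Spatial gradient `∇f` of a function of `(x, t)`. -/
noncomputable def gradx {n : ℕ} (f : EuclideanSpace ℝ (Fin n) × ℝ → ℝ)
    (q : EuclideanSpace ℝ (Fin n) × ℝ) : EuclideanSpace ℝ (Fin n) :=
  gradient (fun y => f (y, q.2)) q.1

/-- Spatial divergence `∇·F` of a vector field of `(x, t)`. -/
noncomputable def divx {n : ℕ}
    (F : EuclideanSpace ℝ (Fin n) × ℝ → EuclideanSpace ℝ (Fin n))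
    (q : EuclideanSpace ℝ (Fin n) × ℝ) : ℝ :=
  ∑ l : Fin n, fderiv ℝ (fun y => F (y, q.2)) q.1 (EuclideanSpace.single l (1 : ℝ)) l

variable {n : ℕ}

local notation "E" => EuclideanSpace ℝ (Fin n)

noncomputable def Dv (v : E × ℝ) (f : E × ℝ → ℝ) (q : E × ℝ) : ℝ := fderiv ℝ f q v

-- slice maps
theorem hasFDerivAt_slice_t (x : E) (t : ℝ) :
    HasDerivAt (fun s : ℝ => ((x, s) : E × ℝ)) ((0 : E), (1 : ℝ)) t := by
  simpa using ((hasDerivAt_const t x).prodMk (hasDerivAt_id t))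

theorem hasFDerivAt_slice_x (x : E) (t : ℝ) :
    HasFDerivAt (fun y : E => ((y, t) : E × ℝ)) (ContinuousLinearMap.inl ℝ E ℝ) x := by
  exact (hasFDerivAt_id x).prodMk (hasFDerivAt_const t x)

theorem hasDerivAt_pt {f : E × ℝ → ℝ} (hf : Differentiable ℝ f) (x : E) (t : ℝ) :
    HasDerivAt (fun s => f (x, s)) (pt f (x, t)) t := by
  have h : DifferentiableAt ℝ (fun s => f (x, s)) t :=
    (hf (x, t)).comp t (hasFDerivAt_slice_t x t).differentiableAt
  exact h.hasDerivAt

theorem pt_eq_Dv {f : E × ℝ → ℝ} (hf : Differentiable ℝ f) (q : E × ℝ) :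
    pt f q = Dv (0, 1) f q := by
  have h := HasFDerivAt.comp_hasDerivAt q.2 (hf (q.1, q.2)).hasFDerivAt
      (hasFDerivAt_slice_t q.1 q.2)
  have : pt f q = fderiv ℝ f (q.1, q.2) ((0 : E), (1 : ℝ)) := by
    simpa [pt, Function.comp_def] using h.deriv
  simpa [Dv] using this

theorem gradx_eq_Dv {f : E × ℝ → ℝ} (hf : Differentiable ℝ f) (q : E × ℝ) (l : Fin n) :
    gradx f q l = Dv (EuclideanSpace.single l (1 : ℝ), 0) f q := by
  have hg : gradx f q l = ⟪gradx f q, EuclideanSpace.single l (1 : ℝ)⟫ := by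
    simp [EuclideanSpace.inner_single_right]
  rw [hg]
  have hslice : HasFDerivAt (fun y : E => f (y, q.2))
      ((fderiv ℝ f (q.1, q.2)).comp (ContinuousLinearMap.inl ℝ E ℝ)) q.1 :=
    (hf (q.1, q.2)).hasFDerivAt.comp q.1 (hasFDerivAt_slice_x q.1 q.2)
  have : gradx f q = gradient (fun y : E => f (y, q.2)) q.1 := rfl
  rw [this, gradient]
  rw [hslice.fderiv]
  rw [InnerProductSpace.toDual_symm_apply]
  simp [Dv]

theorem contDiff_Dv {f : E × ℝ → ℝ} (hf : ContDiff ℝ (⊤ : ℕ∞) f) (v : E × ℝ) :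
    ContDiff ℝ (⊤ : ℕ∞) (Dv v f) := by
  have h1 : ContDiff ℝ (⊤ : ℕ∞) (fderiv ℝ f) := hf.fderiv_right (by simp)
  exact h1.clm_apply contDiff_const

theorem differentiable_of_top {f : E × ℝ → ℝ} (hf : ContDiff ℝ (⊤ : ℕ∞) f) : Differentiable ℝ f :=
  hf.differentiable (by simp)

theorem Dv_comm {f : E × ℝ → ℝ} (hf : ContDiff ℝ (⊤ : ℕ∞) f) (u v : E × ℝ) (q : E × ℝ) :
    Dv u (Dv v f) q = Dv v (Dv u f) q := by
  have hdf : Differentiable ℝ (fderiv ℝ f) :=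
    (hf.fderiv_right (m := (⊤ : ℕ∞)) (by simp)).differentiable (by simp)
  have key : ∀ w : E × ℝ, fderiv ℝ (Dv w f) q
      = (fderiv ℝ (fderiv ℝ f) q).flip w := by
    intro w
    have : Dv w f = fun y => (fderiv ℝ f y) w := rfl
    rw [this, fderiv_clm_apply (hdf q) (differentiableAt_const w)]
    simp
  have hsymm := second_derivative_symmetric (f := f) (f' := fderiv ℝ f)
    (f'' := fderiv ℝ (fderiv ℝ f) q)
    (fun y => ((differentiable_of_top hf) y).hasFDerivAt) (hdf q).hasFDerivAt
  simp only [Dv] at *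
  rw [key v, key u]
  simpa using hsymm u v


theorem divx_congr {F G : E × ℝ → E} (h : ∀ q, F q = G q) (q : E × ℝ) :
    divx F q = divx G q := by
  have : F = G := funext h
  rw [this]

theorem divx_add {F G : E × ℝ → E} (q : E × ℝ)
    (hF : DifferentiableAt ℝ (fun y => F (y, q.2)) q.1)
    (hG : DifferentiableAt ℝ (fun y => G (y, q.2)) q.1) :
    divx (fun q' => F q' + G q') q = divx F q + divx G q := by
  unfold divx
  rw [← Finset.sum_add_distrib]
  refine Finset.sum_congr rfl fun l _ => ?_
  have : (fun y => F (y, q.2) + G (y, q.2)) = (fun y => F (y, q.2)) + (fun y => G (y, q.2)) := rfl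
  rw [show (fun y => (fun q' => F q' + G q') (y, q.2)) = (fun y => F (y, q.2) + G (y, q.2)) from rfl,
    this, fderiv_add hF hG]
  simp

theorem divx_const_smul {F : E × ℝ → E} (c : ℝ) (q : E × ℝ)
    (hF : DifferentiableAt ℝ (fun y => F (y, q.2)) q.1) :
    divx (fun q' => c • F q') q = c * divx F q := by
  unfold divx
  rw [Finset.mul_sum]
  refine Finset.sum_congr rfl fun l _ => ?_
  rw [show (fun y => (fun q' => c • F q') (y, q.2)) = (fun y => c • F (y, q.2)) from rfl,
    fderiv_fun_const_smul hF c]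
  simp

theorem divx_neg {F : E × ℝ → E} (q : E × ℝ)
    (hF : DifferentiableAt ℝ (fun y => F (y, q.2)) q.1) :
    divx (fun q' => -F q') q = -divx F q := by
  have h := divx_const_smul (-1 : ℝ) q hF
  simpa using h

theorem divx_sum {ι : Type*} {s : Finset ι} {F : ι → E × ℝ → E} (q : E × ℝ)
    (hF : ∀ i ∈ s, DifferentiableAt ℝ (fun y => F i (y, q.2)) q.1) :
    divx (fun q' => ∑ i ∈ s, F i q') q = ∑ i ∈ s, divx (F i) q := by
  classical
  induction s using Finset.induction_on with
  | empty => simp [divx, fderiv_fun_const]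
  | insert _ _ hx ih =>
    rename_i a s'
    rw [Finset.sum_insert hx]
    have h1 : divx (fun q' => F a q' + ∑ i ∈ s', F i q') q
        = divx (F a) q + divx (fun q' => ∑ i ∈ s', F i q') q := by
      refine divx_add q (hF a (Finset.mem_insert_self a s')) ?_
      exact DifferentiableAt.fun_sum fun i hi => hF i (Finset.mem_insert_of_mem hi)
    rw [show (fun q' => ∑ i ∈ insert a s', F i q') = (fun q' => F a q' + ∑ i ∈ s', F i q')
      from funext fun q' => Finset.sum_insert hx, h1,
      ih fun i hi => hF i (Finset.mem_insert_of_mem hi)]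

theorem divx_smul {a : E × ℝ → ℝ} {V : E × ℝ → E} (q : E × ℝ)
    (ha : DifferentiableAt ℝ (fun y => a (y, q.2)) q.1)
    (hV : DifferentiableAt ℝ (fun y => V (y, q.2)) q.1) :
    divx (fun q' => a q' • V q') q
      = (∑ l, fderiv ℝ (fun y => a (y, q.2)) q.1 (EuclideanSpace.single l (1 : ℝ)) * V q l)
        + a q * divx V q := by
  unfold divx
  rw [Finset.mul_sum, ← Finset.sum_add_distrib]
  refine Finset.sum_congr rfl fun l _ => ?_
  rw [show (fun y => (fun q' => a q' • V q') (y, q.2))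
      = (fun y => a (y, q.2) • V (y, q.2)) from rfl, fderiv_fun_smul ha hV]
  have hq : ((q.1, q.2) : E × ℝ) = q := rfl
  simp [ContinuousLinearMap.smulRight_apply, hq]
  ring


theorem contDiff_sliceX {F : Type*} [NormedAddCommGroup F] [NormedSpace ℝ F]
    {f : E × ℝ → F} (hf : ContDiff ℝ (⊤ : ℕ∞) f) (t : ℝ) :
    ContDiff ℝ (⊤ : ℕ∞) (fun y : E => f (y, t)) :=
  hf.comp (contDiff_id.prodMk contDiff_const)

theorem diffAt_sliceX {F : Type*} [NormedAddCommGroup F] [NormedSpace ℝ F]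
    {f : E × ℝ → F} (hf : ContDiff ℝ (⊤ : ℕ∞) f) (x : E) (t : ℝ) :
    DifferentiableAt ℝ (fun y : E => f (y, t)) x :=
  ((contDiff_sliceX hf t).differentiable (by simp)) x

theorem gradx_eq_clm {f : E × ℝ → ℝ} (hf : Differentiable ℝ f) (q : E × ℝ) :
    gradx f q = (InnerProductSpace.toDual ℝ E).symm
      ((fderiv ℝ f q).comp (ContinuousLinearMap.inl ℝ E ℝ)) := by
  have hslice : HasFDerivAt (fun y : E => f (y, q.2))
      ((fderiv ℝ f (q.1, q.2)).comp (ContinuousLinearMap.inl ℝ E ℝ)) q.1 :=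
    (hf (q.1, q.2)).hasFDerivAt.comp q.1 (hasFDerivAt_slice_x q.1 q.2)
  rw [gradx, gradient, hslice.fderiv]

theorem contDiff_gradx {f : E × ℝ → ℝ} (hf : ContDiff ℝ (⊤ : ℕ∞) f) :
    ContDiff ℝ (⊤ : ℕ∞) (gradx f) := by
  have h : gradx f = fun q => (InnerProductSpace.toDual ℝ E).symm
      ((fderiv ℝ f q).comp (ContinuousLinearMap.inl ℝ E ℝ)) :=
    funext (gradx_eq_clm (hf.differentiable (by simp)))
  rw [h]
  have h1 : ContDiff ℝ (⊤ : ℕ∞) (fun q : E × ℝ => (fderiv ℝ f q).comp (ContinuousLinearMap.inl ℝ E ℝ)) :=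
    (hf.fderiv_right (by simp)).clm_comp contDiff_const
  exact ((InnerProductSpace.toDual ℝ E).symm.toContinuousLinearEquiv.contDiff).comp h1

theorem contDiff_gradient {b : E → ℝ} (hb : ContDiff ℝ (⊤ : ℕ∞) b) :
    ContDiff ℝ (⊤ : ℕ∞) (fun x => gradient b x) := by
  have h : (fun x => gradient b x) = fun x => (InnerProductSpace.toDual ℝ E).symm (fderiv ℝ b x) :=
    rfl
  rw [h]
  exact ((InnerProductSpace.toDual ℝ E).symm.toContinuousLinearEquiv.contDiff).comp
    (hb.fderiv_right (by simp))


theorem differentiable_of_top' {F : Type*} [NormedAddCommGroup F] [NormedSpace ℝ F]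
    {f : E × ℝ → F} (hf : ContDiff ℝ (⊤ : ℕ∞) f) : Differentiable ℝ f := hf.differentiable (by simp)

theorem contDiff_pt {f : E × ℝ → ℝ} (hf : ContDiff ℝ (⊤ : ℕ∞) f) : ContDiff ℝ (⊤ : ℕ∞) (pt f) := by
  have h : pt f = Dv (0, 1) f := funext (pt_eq_Dv (differentiable_of_top' hf))
  rw [h]; exact contDiff_Dv hf _

theorem hasDerivAt_gradx_slice {f : E × ℝ → ℝ} (hf : ContDiff ℝ (⊤ : ℕ∞) f) (x : E) (t : ℝ)
    (l : Fin n) :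
    HasDerivAt (fun s => gradx f (x, s) l) (gradx (pt f) (x, t) l) t := by
  have hfd : Differentiable ℝ f := differentiable_of_top' hf
  have h1 : (fun s => gradx f (x, s) l)
      = fun s => Dv (EuclideanSpace.single l (1 : ℝ), 0) f (x, s) :=
    funext fun s => gradx_eq_Dv hfd (x, s) l
  have hD : ContDiff ℝ (⊤ : ℕ∞) (Dv (EuclideanSpace.single l (1 : ℝ), 0) f) := contDiff_Dv hf _
  have h2 := hasDerivAt_pt (differentiable_of_top' hD) x t
  rw [h1]
  convert h2 using 1
  have hptf : pt f = Dv (0, 1) f := funext (pt_eq_Dv hfd)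
  rw [hptf,
    gradx_eq_Dv (differentiable_of_top' (contDiff_Dv hf (0, 1))) (x, t) l,
    pt_eq_Dv (differentiable_of_top' hD) (x, t), Dv_comm hf]

theorem fderiv_slice_apply {f : E × ℝ → ℝ} (hf : Differentiable ℝ f) (q : E × ℝ) (l : Fin n) :
    fderiv ℝ (fun y => f (y, q.2)) q.1 (EuclideanSpace.single l (1 : ℝ)) = gradx f q l := by
  have hslice : HasFDerivAt (fun y : E => f (y, q.2))
      ((fderiv ℝ f (q.1, q.2)).comp (ContinuousLinearMap.inl ℝ E ℝ)) q.1 :=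
    (hf (q.1, q.2)).hasFDerivAt.comp q.1 (hasFDerivAt_slice_x q.1 q.2)
  rw [hslice.fderiv, gradx_eq_Dv hf q l]
  simp [Dv]

theorem real_inner_eq_sum (u v : E) : ⟪u, v⟫ = ∑ l, u l * v l := by
  simp [PiLp.inner_apply, RCLike.inner_apply, conj_trivial]
  exact Finset.sum_congr rfl fun _ _ => mul_comm _ _

theorem norm_sq_eq_sum' (u : E) : ‖u‖ ^ 2 = ∑ l, u l ^ 2 := by
  rw [← real_inner_self_eq_norm_sq]
  simp only [PiLp.inner_apply, RCLike.inner_apply, conj_trivial, sq]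

-- coefficient lemmas
theorem coef0 (m : ℕ) : (1:ℝ)/((m:ℝ)+1) * ((m+1 : ℕ):ℝ) = 1 := by
  push_cast
  rw [div_mul_cancel₀]
  positivity

theorem coef1 (i j : ℕ) :
    (4*i*j:ℝ)/((2*((i:ℝ)+(j:ℝ)))-1) * ((2*(i+j)-1 : ℕ):ℝ) = 4*i*j := by
  rcases Nat.eq_zero_or_pos i with hi | hi
  · simp [hi]
  rcases Nat.eq_zero_or_pos j with hj | hj
  · simp [hj]
  have h1 : (1:ℕ) ≤ 2*(i+j) := by omega
  have h2 : ((2*(i+j)-1 : ℕ):ℝ) = 2*((i:ℝ)+(j:ℝ)) - 1 := by push_cast [h1]; ring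
  rw [h2, div_mul_cancel₀]
  have : (1:ℝ) ≤ (i:ℝ) + (j:ℝ) := by
    have : (1:ℕ) ≤ i + j := by omega
    exact_mod_cast this
  nlinarith

theorem coef2 (a c : ℕ) :
    2*(a:ℝ)/((a:ℝ)+(c:ℝ)) * ((a+c : ℕ):ℝ) = 2*(a:ℝ) := by
  rcases Nat.eq_zero_or_pos a with ha | ha
  · simp [ha]
  have h : ((a:ℝ)+(c:ℝ)) ≠ 0 := by positivity
  push_cast
  field_simp

theorem coef3 (a c : ℕ) :
    ((a:ℝ)*(c:ℝ))/((a:ℝ)+(c:ℝ)-1) * ((a+c-1 : ℕ):ℝ) = (a:ℝ)*(c:ℝ) := by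
  rcases Nat.eq_zero_or_pos a with ha | ha
  · simp [ha]
  rcases Nat.eq_zero_or_pos c with hc | hc
  · simp [hc]
  have h1 : (1:ℕ) ≤ a + c := by omega
  have h2 : ((a+c-1 : ℕ):ℝ) = (a:ℝ)+(c:ℝ) - 1 := by push_cast [h1]; ring
  have h3 : ((a:ℝ)+(c:ℝ)-1) ≠ 0 := by
    have ha' : (1:ℝ) ≤ (a:ℝ) := by exact_mod_cast ha
    have hc' : (1:ℝ) ≤ (c:ℝ) := by exact_mod_cast hc
    nlinarith
  rw [h2, div_mul_cancel₀ _ h3]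


theorem HasDerivAt.congr_d {f : ℝ → ℝ} {d d' : ℝ} {t : ℝ} (h : HasDerivAt f d t)
    (hd : d = d') : HasDerivAt f d' t := hd ▸ h

theorem sum_swap' {M : Type*} [AddCommMonoid M] {m k : ℕ} (f : Fin m → Fin k → M) :
    ∑ i, ∑ j, f i j = ∑ i, ∑ j, f j i := Finset.sum_comm

theorem coef0' (a c : ℕ) : (1:ℝ)/((a:ℝ)+(c:ℝ)+1) * ((a+c+1 : ℕ):ℝ) = 1 := by
  push_cast; rw [div_mul_cancel₀]; positivity

theorem coef0'' (i j : ℕ) : (1:ℝ)/(2*((i:ℝ)+(j:ℝ))+1) * ((2*(i+j)+1 : ℕ):ℝ) = 1 := by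
  push_cast; rw [div_mul_cancel₀]; positivity

theorem sum_sum_congr' {m k : ℕ} {β : Type*} [AddCommMonoid β] {f g : Fin m → Fin k → β}
    (h : ∀ i j, f i j = g i j) : ∑ i, ∑ j, f i j = ∑ i, ∑ j, g i j :=
  Finset.sum_congr rfl fun i _ => Finset.sum_congr rfl fun j _ => h i j

theorem sum_sum_swap {m : ℕ} {β : Type*} [AddCommMonoid β] {f g : Fin m → Fin m → β}
    (h : ∀ i j, f j i = g i j) : ∑ i, ∑ j, f i j = ∑ i, ∑ j, g i j := by
  rw [Finset.sum_comm]; exact sum_sum_congr' h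

theorem sum_sum_factor {m k : ℕ} (c : ℝ) {f g : Fin m → Fin k → ℝ}
    (h : ∀ i j, f i j = c * g i j) : ∑ i, ∑ j, f i j = c * ∑ i, ∑ j, g i j := by
  rw [Finset.mul_sum]
  exact Finset.sum_congr rfl fun i _ => by
    rw [Finset.mul_sum]; exact Finset.sum_congr rfl fun j _ => h i j

theorem prod_expand (V : ℝ) (a c : ℕ) (gi gj fi fj bl : ℝ) :
    (V ^ a * gi - (a : ℝ) * V ^ (a - 1) * fi * bl) * (V ^ c * gj - (c : ℝ) * V ^ (c - 1) * fj * bl)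
      = V ^ (a + c) * (gi * gj) - (c : ℝ) * V ^ (a + c - 1) * (fj * (bl * gi))
        - (a : ℝ) * V ^ (a + c - 1) * (fi * (bl * gj))
        + (a : ℝ) * (c : ℝ) * V ^ (a + c - 2) * (fi * fj) * (bl * bl) := by
  rcases Nat.eq_zero_or_pos a with h1 | h1 <;> rcases Nat.eq_zero_or_pos c with h2 | h2
  · simp [h1, h2]
  · obtain ⟨c', rfl⟩ : ∃ c', c = c' + 1 := ⟨c - 1, by omega⟩
    subst h1
    simp only [show 0 + (c' + 1) - 1 = c' from by omega, show 0 + (c' + 1) = c' + 1 from by omega,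
      Nat.add_sub_cancel]
    push_cast
    ring
  · obtain ⟨a', rfl⟩ : ∃ a', a = a' + 1 := ⟨a - 1, by omega⟩
    subst h2
    simp only [show a' + 1 + 0 - 1 = a' from by omega, show a' + 1 + 0 = a' + 1 from by omega,
      Nat.add_sub_cancel]
    push_cast
    ring
  · obtain ⟨a', rfl⟩ : ∃ a', a = a' + 1 := ⟨a - 1, by omega⟩
    obtain ⟨c', rfl⟩ : ∃ c', c = c' + 1 := ⟨c - 1, by omega⟩
    simp only [show a' + 1 + (c' + 1) - 1 = a' + c' + 1 from by omega,
      show a' + 1 + (c' + 1) - 2 = a' + c' from by omega,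
      show a' + 1 + (c' + 1) = a' + c' + 2 from by omega, Nat.add_sub_cancel]
    push_cast
    ring

theorem w1_term (V fi fj : ℝ) (i j : ℕ) :
    (2 * (i:ℝ) * V ^ (2*i-1) * fi) * (2 * (j:ℝ) * V ^ (2*j-1) * fj)
      = 4 * (i:ℝ) * (j:ℝ) * V ^ (2*(i+j)-2) * fi * fj := by
  rcases Nat.eq_zero_or_pos i with h1 | h1
  · simp [h1]
  rcases Nat.eq_zero_or_pos j with h2 | h2
  · simp [h2]
  obtain ⟨a, rfl⟩ : ∃ a, i = a + 1 := ⟨i - 1, by omega⟩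
  obtain ⟨c, rfl⟩ : ∃ c, j = c + 1 := ⟨j - 1, by omega⟩
  rw [show 2*(a+1)-1 = 2*a+1 from by omega, show 2*(c+1)-1 = 2*c+1 from by omega,
    show 2*((a+1)+(c+1))-2 = (2*a+1)+(2*c+1) from by omega]
  push_cast
  ring

theorem w2_term (V fi fj : ℝ) (a c : ℕ) :
    ((a:ℝ) * V ^ (a-1) * fi) * ((c:ℝ) * V ^ (c-1) * fj)
      = (a:ℝ) * (c:ℝ) * V ^ (a+c-2) * (fi * fj) := by
  rcases Nat.eq_zero_or_pos a with h1 | h1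
  · simp [h1]
  rcases Nat.eq_zero_or_pos c with h2 | h2
  · simp [h2]
  obtain ⟨a', rfl⟩ : ∃ x, a = x + 1 := ⟨a - 1, by omega⟩
  obtain ⟨c', rfl⟩ : ∃ x, c = x + 1 := ⟨c - 1, by omega⟩
  rw [show (a'+1)+(c'+1)-2 = a'+c' from by omega, Nat.add_sub_cancel, Nat.add_sub_cancel]
  push_cast
  ring

theorem euclid_sum_apply {m : ℕ} {k : Type*} (s : Finset k) (F : k → EuclideanSpace ℝ (Fin m))
    (l : Fin m) : (∑ i ∈ s, F i) l = ∑ i ∈ s, F i l := by rw [WithLp.ofLp_sum, Finset.sum_apply]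


set_option maxHeartbeats 4000000 in
/-- Local conservation of energy `∂ₜ e^K + ∇·f_e^K = 0` for regular solutions of the Kakinuma
model for interfacial gravity waves. -/
theorem stmt_18 (n N Ns : ℕ) (hn : 1 ≤ n) (p : Fin (Ns + 1) → ℕ)
    (hp0 : p 0 = 0) (hp : StrictMono p)
    (g ρ₁ ρ₂ h₁ h₂ : ℝ) (hg : 0 < g) (hρ₁ : 0 < ρ₁) (hρ₂ : 0 < ρ₂)
    (hh₁ : 0 < h₁) (hh₂ : 0 < h₂)
    (b : EuclideanSpace ℝ (Fin n) → ℝ) (hb : ContDiff ℝ (⊤ : ℕ∞) b)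
    (ζ : EuclideanSpace ℝ (Fin n) × ℝ → ℝ)
    (φ₁ : Fin (N + 1) → EuclideanSpace ℝ (Fin n) × ℝ → ℝ)
    (φ₂ : Fin (Ns + 1) → EuclideanSpace ℝ (Fin n) × ℝ → ℝ)
    (hζ : ContDiff ℝ (⊤ : ℕ∞) ζ) (hφ₁ : ∀ i, ContDiff ℝ (⊤ : ℕ∞) (φ₁ i))
    (hφ₂ : ∀ i, ContDiff ℝ (⊤ : ℕ∞) (φ₂ i))
    -- layer thicknesses
    (H₁ H₂ : EuclideanSpace ℝ (Fin n) × ℝ → ℝ)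
    (hH₁ : ∀ q, H₁ q = h₁ - ζ q)
    (hH₂ : ∀ q, H₂ q = h₂ + ζ q - b q.1)
    -- approximate horizontal and vertical velocities at the interface
    (u₁ u₂ : EuclideanSpace ℝ (Fin n) × ℝ → EuclideanSpace ℝ (Fin n))
    (w₁ w₂ : EuclideanSpace ℝ (Fin n) × ℝ → ℝ)
    (hu₁ : ∀ q, u₁ q = ∑ j : Fin (N + 1), H₁ q ^ (2 * (j : ℕ)) • gradx (φ₁ j) q)
    (hw₁ : ∀ q, w₁ q = -∑ j : Fin (N + 1),
      (2 * (j : ℕ) : ℝ) * H₁ q ^ (2 * (j : ℕ) - 1) * φ₁ j q)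
    (hu₂ : ∀ q, u₂ q = ∑ j : Fin (Ns + 1),
      (H₂ q ^ (p j) • gradx (φ₂ j) q
        - ((p j : ℝ) * H₂ q ^ (p j - 1) * φ₂ j q) • gradient b q.1))
    (hw₂ : ∀ q, w₂ q = ∑ j : Fin (Ns + 1), (p j : ℝ) * H₂ q ^ (p j - 1) * φ₂ j q)
    -- the Kakinuma model, first family of equations
    (heq1 : ∀ q, ∀ i : Fin (N + 1),
      H₁ q ^ (2 * (i : ℕ)) * pt ζ q
        - ∑ j : Fin (N + 1),
            (divx (fun q' =>
                ((1 : ℝ) / (2 * ((i : ℕ) + (j : ℕ)) + 1)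
                  * H₁ q' ^ (2 * ((i : ℕ) + (j : ℕ)) + 1)) • gradx (φ₁ j) q') q
              - (4 * (i : ℕ) * (j : ℕ) : ℝ) / ((2 * ((i : ℕ) + (j : ℕ)) : ℝ) - 1)
                * H₁ q ^ (2 * ((i : ℕ) + (j : ℕ)) - 1) * φ₁ j q) = 0)
    -- the Kakinuma model, second family of equations
    (heq2 : ∀ q, ∀ i : Fin (Ns + 1),
      H₂ q ^ (p i) * pt ζ q
        + ∑ j : Fin (Ns + 1),
            (divx (fun q' =>
                ((1 : ℝ) / ((p i : ℝ) + (p j : ℝ) + 1)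
                  * H₂ q' ^ (p i + p j + 1)) • gradx (φ₂ j) q'
                - ((p j : ℝ) / ((p i : ℝ) + (p j : ℝ))
                  * H₂ q' ^ (p i + p j) * φ₂ j q') • gradient b q'.1) q
              + (p i : ℝ) / ((p i : ℝ) + (p j : ℝ)) * H₂ q ^ (p i + p j)
                * ⟪gradient b q.1, gradx (φ₂ j) q⟫
              - ((p i : ℝ) * (p j : ℝ)) / ((p i : ℝ) + (p j : ℝ) - 1)
                * H₂ q ^ (p i + p j - 1) * (1 + ‖gradient b q.1‖ ^ 2) * φ₂ j q) = 0)
    -- the Kakinuma model, Bernoulli-type equation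
    (heq3 : ∀ q,
      ρ₁ * ((∑ j : Fin (N + 1), H₁ q ^ (2 * (j : ℕ)) * pt (φ₁ j) q)
          + g * ζ q + (1 / 2) * (‖u₁ q‖ ^ 2 + w₁ q ^ 2))
        - ρ₂ * ((∑ j : Fin (Ns + 1), H₂ q ^ (p j) * pt (φ₂ j) q)
          + g * ζ q + (1 / 2) * (‖u₂ q‖ ^ 2 + w₂ q ^ 2)) = 0)
    -- energy density
    (eK : EuclideanSpace ℝ (Fin n) × ℝ → ℝ)
    (heK : ∀ q, eK q =
      ρ₁ / 2 * ∑ i : Fin (N + 1), ∑ j : Fin (N + 1),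
          ((1 : ℝ) / (2 * ((i : ℕ) + (j : ℕ)) + 1)
              * H₁ q ^ (2 * ((i : ℕ) + (j : ℕ)) + 1)
              * ⟪gradx (φ₁ i) q, gradx (φ₁ j) q⟫
            + (4 * (i : ℕ) * (j : ℕ) : ℝ) / ((2 * ((i : ℕ) + (j : ℕ)) : ℝ) - 1)
              * H₁ q ^ (2 * ((i : ℕ) + (j : ℕ)) - 1) * φ₁ i q * φ₁ j q)
        + ρ₂ / 2 * ∑ i : Fin (Ns + 1), ∑ j : Fin (Ns + 1),
          ((1 : ℝ) / ((p i : ℝ) + (p j : ℝ) + 1) * H₂ q ^ (p i + p j + 1)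
              * ⟪gradx (φ₂ i) q, gradx (φ₂ j) q⟫
            - 2 * (p i : ℝ) / ((p i : ℝ) + (p j : ℝ)) * H₂ q ^ (p i + p j)
              * φ₂ i q * ⟪gradient b q.1, gradx (φ₂ j) q⟫
            + ((p i : ℝ) * (p j : ℝ)) / ((p i : ℝ) + (p j : ℝ) - 1)
              * H₂ q ^ (p i + p j - 1) * (1 + ‖gradient b q.1‖ ^ 2)
              * φ₂ i q * φ₂ j q)
        + (1 / 2) * (ρ₂ - ρ₁) * g * ζ q ^ 2)
    -- energy flux
    (fK : EuclideanSpace ℝ (Fin n) × ℝ → EuclideanSpace ℝ (Fin n))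
    (hfK : ∀ q, fK q =
      ρ₁ • (∑ i : Fin (N + 1), ∑ j : Fin (N + 1),
          pt (φ₁ i) q • ((-((1 : ℝ) / (2 * ((i : ℕ) + (j : ℕ)) + 1))
            * H₁ q ^ (2 * ((i : ℕ) + (j : ℕ)) + 1)) • gradx (φ₁ j) q))
        + ρ₂ • (∑ i : Fin (Ns + 1), ∑ j : Fin (Ns + 1),
          pt (φ₂ i) q • ((-((1 : ℝ) / ((p i : ℝ) + (p j : ℝ) + 1))
              * H₂ q ^ (p i + p j + 1)) • gradx (φ₂ j) q
            + ((p j : ℝ) / ((p i : ℝ) + (p j : ℝ)) * H₂ q ^ (p i + p j)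
              * φ₂ j q) • gradient b q.1))) :
    ∀ q : EuclideanSpace ℝ (Fin n) × ℝ, pt eK q + divx fK q = 0 := by
  intro q
  obtain ⟨x, t⟩ := q
  have hζd : Differentiable ℝ ζ := hζ.differentiable (by simp)
  have hφ₁d : ∀ i, Differentiable ℝ (φ₁ i) := fun i => (hφ₁ i).differentiable (by simp)
  have hφ₂d : ∀ i, Differentiable ℝ (φ₂ i) := fun i => (hφ₂ i).differentiable (by simp)
  have hH₁e : H₁ = fun q => h₁ - ζ q := funext hH₁
  have hH₂e : H₂ = fun q => h₂ + ζ q - b q.1 := funext hH₂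
  subst hH₁e hH₂e
  simp only [] at heq1 heq2 heq3 heK hfK hu₁ hu₂ hw₁ hw₂
  have hdζ : HasDerivAt (fun s => ζ (x, s)) (pt ζ (x, t)) t := hasDerivAt_pt hζd x t
  have hdφ1 : ∀ i, HasDerivAt (fun s => φ₁ i (x, s)) (pt (φ₁ i) (x, t)) t :=
    fun i => hasDerivAt_pt (hφ₁d i) x t
  have hdφ2 : ∀ i, HasDerivAt (fun s => φ₂ i (x, s)) (pt (φ₂ i) (x, t)) t :=
    fun i => hasDerivAt_pt (hφ₂d i) x t
  have hdg1 : ∀ (i) (l : Fin n), HasDerivAt (fun s => gradx (φ₁ i) (x, s) l)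
      (gradx (pt (φ₁ i)) (x, t) l) t := fun i l => hasDerivAt_gradx_slice (hφ₁ i) x t l
  have hdg2 : ∀ (i) (l : Fin n), HasDerivAt (fun s => gradx (φ₂ i) (x, s) l)
      (gradx (pt (φ₂ i)) (x, t) l) t := fun i l => hasDerivAt_gradx_slice (hφ₂ i) x t l
  have hdH1 : HasDerivAt (fun s => h₁ - ζ (x, s)) (-pt ζ (x, t)) t := hdζ.const_sub h₁
  have hdH2 : HasDerivAt (fun s => h₂ + ζ (x, s) - b x) (pt ζ (x, t)) t :=
    (hdζ.const_add h₂).sub_const (b x)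
  have hPTeq : pt eK (x, t) = ρ₁ / 2 * (∑ i : Fin (N + 1), ∑ j : Fin (N + 1),
      (-(pt ζ (x, t)) * ((h₁ - ζ (x, t)) ^ (2 * ((i : ℕ) + (j : ℕ))) * (∑ l, gradx (φ₁ i) (x, t) l * gradx (φ₁ j) (x, t) l))
      + (1 : ℝ) / (2 * ((i : ℕ) + (j : ℕ)) + 1) * (h₁ - ζ (x, t)) ^ (2 * ((i : ℕ) + (j : ℕ)) + 1) * (∑ l, gradx (pt (φ₁ i)) (x, t) l * gradx (φ₁ j) (x, t) l)
      + (1 : ℝ) / (2 * ((i : ℕ) + (j : ℕ)) + 1) * (h₁ - ζ (x, t)) ^ (2 * ((i : ℕ) + (j : ℕ)) + 1) * (∑ l, gradx (φ₁ i) (x, t) l * gradx (pt (φ₁ j)) (x, t) l)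
      + -(pt ζ (x, t)) * ((4 * (i : ℕ) * (j : ℕ) : ℝ) * (h₁ - ζ (x, t)) ^ (2 * ((i : ℕ) + (j : ℕ)) - 2) * φ₁ i (x, t) * φ₁ j (x, t))
      + (4 * (i : ℕ) * (j : ℕ) : ℝ) / ((2 * ((i : ℕ) + (j : ℕ)) : ℝ) - 1) * (h₁ - ζ (x, t)) ^ (2 * ((i : ℕ) + (j : ℕ)) - 1) * (pt (φ₁ i) (x, t) * φ₁ j (x, t))
      + (4 * (i : ℕ) * (j : ℕ) : ℝ) / ((2 * ((i : ℕ) + (j : ℕ)) : ℝ) - 1) * (h₁ - ζ (x, t)) ^ (2 * ((i : ℕ) + (j : ℕ)) - 1) * (φ₁ i (x, t) * pt (φ₁ j) (x, t))))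
    + ρ₂ / 2 * (∑ i : Fin (Ns + 1), ∑ j : Fin (Ns + 1),
      (pt ζ (x, t) * ((h₂ + ζ (x, t) - b x) ^ (p i + p j) * (∑ l, gradx (φ₂ i) (x, t) l * gradx (φ₂ j) (x, t) l))
      + (1 : ℝ) / ((p i : ℝ) + (p j : ℝ) + 1) * (h₂ + ζ (x, t) - b x) ^ (p i + p j + 1) * (∑ l, gradx (pt (φ₂ i)) (x, t) l * gradx (φ₂ j) (x, t) l)
      + (1 : ℝ) / ((p i : ℝ) + (p j : ℝ) + 1) * (h₂ + ζ (x, t) - b x) ^ (p i + p j + 1) * (∑ l, gradx (φ₂ i) (x, t) l * gradx (pt (φ₂ j)) (x, t) l)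
      - pt ζ (x, t) * (2 * (p i : ℝ) * (h₂ + ζ (x, t) - b x) ^ (p i + p j - 1) * φ₂ i (x, t) * (∑ l, gradient b x l * gradx (φ₂ j) (x, t) l))
      - 2 * (p i : ℝ) / ((p i : ℝ) + (p j : ℝ)) * (h₂ + ζ (x, t) - b x) ^ (p i + p j) * (pt (φ₂ i) (x, t) * (∑ l, gradient b x l * gradx (φ₂ j) (x, t) l))
      - 2 * (p i : ℝ) / ((p i : ℝ) + (p j : ℝ)) * (h₂ + ζ (x, t) - b x) ^ (p i + p j) * (φ₂ i (x, t) * (∑ l, gradient b x l * gradx (pt (φ₂ j)) (x, t) l))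
      + pt ζ (x, t) * ((p i : ℝ) * (p j : ℝ) * (h₂ + ζ (x, t) - b x) ^ (p i + p j - 2) * (1 + ‖gradient b x‖ ^ 2) * φ₂ i (x, t) * φ₂ j (x, t))
      + (p i : ℝ) * (p j : ℝ) / ((p i : ℝ) + (p j : ℝ) - 1) * (h₂ + ζ (x, t) - b x) ^ (p i + p j - 1) * (1 + ‖gradient b x‖ ^ 2) * (pt (φ₂ i) (x, t) * φ₂ j (x, t))
      + (p i : ℝ) * (p j : ℝ) / ((p i : ℝ) + (p j : ℝ) - 1) * (h₂ + ζ (x, t) - b x) ^ (p i + p j - 1) * (1 + ‖gradient b x‖ ^ 2) * (φ₂ i (x, t) * pt (φ₂ j) (x, t))))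
    + (ρ₂ - ρ₁) * g * (ζ (x, t) * pt ζ (x, t)) := by
    rw [show pt eK (x, t) = deriv (fun s => eK (x, s)) t from rfl]
    simp only [heK, real_inner_eq_sum]
    refine HasDerivAt.deriv (HasDerivAt.congr_d (HasDerivAt.add (HasDerivAt.add
        (HasDerivAt.const_mul (ρ₁/2) (HasDerivAt.fun_sum fun i _ => HasDerivAt.fun_sum fun j _ =>
          HasDerivAt.add
            (((hasDerivAt_const t _).fun_mul (hdH1.fun_pow _)).fun_mul
              (HasDerivAt.fun_sum fun l _ => (hdg1 i l).fun_mul (hdg1 j l)))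
            ((((hasDerivAt_const t _).fun_mul (hdH1.fun_pow _)).fun_mul (hdφ1 i)).fun_mul (hdφ1 j))))
        (HasDerivAt.const_mul (ρ₂/2) (HasDerivAt.fun_sum fun i _ => HasDerivAt.fun_sum fun j _ =>
          HasDerivAt.add
            (HasDerivAt.sub
              (((hasDerivAt_const t _).fun_mul (hdH2.fun_pow _)).fun_mul
                (HasDerivAt.fun_sum fun l _ => (hdg2 i l).fun_mul (hdg2 j l)))
              ((((hasDerivAt_const t _).fun_mul (hdH2.fun_pow _)).fun_mul (hdφ2 i)).fun_mul
                (HasDerivAt.fun_sum fun l _ => (hasDerivAt_const t _).fun_mul (hdg2 j l))))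
            (((((hasDerivAt_const t _).fun_mul (hdH2.fun_pow _)).fun_mul (hasDerivAt_const t _)).fun_mul
              (hdφ2 i)).fun_mul (hdφ2 j)))))
        (HasDerivAt.const_mul (1/2*(ρ₂-ρ₁)*g) (hdζ.fun_pow 2))) ?_)
    · congr 1
      · congr 1
        · congr 1
          refine Finset.sum_congr rfl fun i _ => Finset.sum_congr rfl fun j _ => ?_
          have em : 2 * ((i : ℕ) + (j : ℕ)) - 1 - 1 = 2 * ((i : ℕ) + (j : ℕ)) - 2 := by omega
          simp only [zero_mul, zero_add, Finset.sum_add_distrib, Nat.add_sub_cancel, em]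
          linear_combination ((h₁ - ζ (x, t)) ^ (2 * ((i : ℕ) + (j : ℕ))) * -(pt ζ (x, t)) * (∑ l, gradx (φ₁ i) (x, t) l * gradx (φ₁ j) (x, t) l)) * coef0'' (i : ℕ) (j : ℕ)
            + ((h₁ - ζ (x, t)) ^ (2 * ((i : ℕ) + (j : ℕ)) - 2) * -(pt ζ (x, t)) * φ₁ i (x, t) * φ₁ j (x, t)) * coef1 (i : ℕ) (j : ℕ)
        · congr 1
          refine Finset.sum_congr rfl fun i _ => Finset.sum_congr rfl fun j _ => ?_
          have em : p i + p j - 1 - 1 = p i + p j - 2 := by omega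
          simp only [zero_mul, zero_add, Finset.sum_add_distrib, Nat.add_sub_cancel, em]
          linear_combination ((h₂ + ζ (x, t) - b x) ^ (p i + p j) * pt ζ (x, t) * (∑ l, gradx (φ₂ i) (x, t) l * gradx (φ₂ j) (x, t) l)) * coef0' (p i) (p j)
            + (-((h₂ + ζ (x, t) - b x) ^ (p i + p j - 1) * pt ζ (x, t) * φ₂ i (x, t) * (∑ l, gradient b x l * gradx (φ₂ j) (x, t) l))) * coef2 (p i) (p j)
            + ((h₂ + ζ (x, t) - b x) ^ (p i + p j - 2) * pt ζ (x, t) * (1 + ‖gradient b x‖ ^ 2) * φ₂ i (x, t) * φ₂ j (x, t)) * coef3 (p i) (p j)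
      · push_cast
        ring

  -- STEP 2 : divergence of the energy flux
  have hsH1 : ContDiff ℝ (⊤ : ℕ∞) (fun q : EuclideanSpace ℝ (Fin n) × ℝ => h₁ - ζ q) :=
    contDiff_const.sub hζ
  have hsH2 : ContDiff ℝ (⊤ : ℕ∞) (fun q : EuclideanSpace ℝ (Fin n) × ℝ => h₂ + ζ q - b q.1) :=
    (contDiff_const.add hζ).sub (hb.comp contDiff_fst)
  have hsgb : ContDiff ℝ (⊤ : ℕ∞) (fun q : EuclideanSpace ℝ (Fin n) × ℝ => gradient b q.1) :=
    (contDiff_gradient hb).comp contDiff_fst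
  have hsW1 : ∀ i j : Fin (N + 1), ContDiff ℝ (⊤ : ℕ∞) (fun q' =>
      ((1 : ℝ) / (2 * ((i : ℕ) + (j : ℕ)) + 1) * (h₁ - ζ q') ^ (2 * ((i : ℕ) + (j : ℕ)) + 1)) • gradx (φ₁ j) q') :=
    fun i j => (contDiff_const.mul (hsH1.pow _)).smul (contDiff_gradx (hφ₁ j))
  have hsV1 : ∀ i j : Fin (N + 1), ContDiff ℝ (⊤ : ℕ∞) (fun q' =>
      (-((1 : ℝ) / (2 * ((i : ℕ) + (j : ℕ)) + 1)) * (h₁ - ζ q') ^ (2 * ((i : ℕ) + (j : ℕ)) + 1)) • gradx (φ₁ j) q') :=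
    fun i j => (contDiff_const.mul (hsH1.pow _)).smul (contDiff_gradx (hφ₁ j))
  have hsW2 : ∀ i j : Fin (Ns + 1), ContDiff ℝ (⊤ : ℕ∞) (fun q' =>
      ((1 : ℝ) / ((p i : ℝ) + (p j : ℝ) + 1) * (h₂ + ζ q' - b q'.1) ^ (p i + p j + 1)) • gradx (φ₂ j) q'
        - ((p j : ℝ) / ((p i : ℝ) + (p j : ℝ)) * (h₂ + ζ q' - b q'.1) ^ (p i + p j) * φ₂ j q') • gradient b q'.1) :=
    fun i j => ((contDiff_const.mul (hsH2.pow _)).smul (contDiff_gradx (hφ₂ j))).sub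
      (((contDiff_const.mul (hsH2.pow _)).mul (hφ₂ j)).smul hsgb)
  have hsV2 : ∀ i j : Fin (Ns + 1), ContDiff ℝ (⊤ : ℕ∞) (fun q' =>
      (-((1 : ℝ) / ((p i : ℝ) + (p j : ℝ) + 1)) * (h₂ + ζ q' - b q'.1) ^ (p i + p j + 1)) • gradx (φ₂ j) q'
        + ((p j : ℝ) / ((p i : ℝ) + (p j : ℝ)) * (h₂ + ζ q' - b q'.1) ^ (p i + p j) * φ₂ j q') • gradient b q'.1) :=
    fun i j => ((contDiff_const.mul (hsH2.pow _)).smul (contDiff_gradx (hφ₂ j))).add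
      (((contDiff_const.mul (hsH2.pow _)).mul (hφ₂ j)).smul hsgb)
  have hfds1 : ∀ (i : Fin (N + 1)) (l : Fin n), fderiv ℝ (fun y => pt (φ₁ i) (y, t)) x
      (EuclideanSpace.single l (1:ℝ)) = gradx (pt (φ₁ i)) (x, t) l :=
    fun i l => fderiv_slice_apply (differentiable_of_top (contDiff_pt (hφ₁ i))) (x, t) l
  have hfds2 : ∀ (i : Fin (Ns + 1)) (l : Fin n), fderiv ℝ (fun y => pt (φ₂ i) (y, t)) x
      (EuclideanSpace.single l (1:ℝ)) = gradx (pt (φ₂ i)) (x, t) l :=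
    fun i l => fderiv_slice_apply (differentiable_of_top (contDiff_pt (hφ₂ i))) (x, t) l
  have hV1div : ∀ i j : Fin (N + 1), divx (fun q' =>
      (-((1 : ℝ) / (2 * ((i : ℕ) + (j : ℕ)) + 1)) * (h₁ - ζ q') ^ (2 * ((i : ℕ) + (j : ℕ)) + 1)) • gradx (φ₁ j) q') (x, t) = -(divx (fun q' => (((1 : ℝ) / (2 * ((i : ℕ) + (j : ℕ)) + 1)) * (h₁ - ζ q') ^ (2 * ((i : ℕ) + (j : ℕ)) + 1)) • gradx (φ₁ j) q') (x, t)) := by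
    intro i j
    rw [divx_congr (show ∀ q', (-((1 : ℝ) / (2 * ((i : ℕ) + (j : ℕ)) + 1)) * (h₁ - ζ q') ^ (2 * ((i : ℕ) + (j : ℕ)) + 1)) • gradx (φ₁ j) q'
        = -((((1 : ℝ) / (2 * ((i : ℕ) + (j : ℕ)) + 1) * (h₁ - ζ q') ^ (2 * ((i : ℕ) + (j : ℕ)) + 1)) • gradx (φ₁ j) q')) from
        fun q' => by rw [neg_mul, neg_smul]) (x, t),
      divx_neg (x, t) (diffAt_sliceX (hsW1 i j) x t)]
  have hV2div : ∀ i j : Fin (Ns + 1), divx (fun q' =>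
      (-((1 : ℝ) / ((p i : ℝ) + (p j : ℝ) + 1)) * (h₂ + ζ q' - b q'.1) ^ (p i + p j + 1)) • gradx (φ₂ j) q'
        + ((p j : ℝ) / ((p i : ℝ) + (p j : ℝ)) * (h₂ + ζ q' - b q'.1) ^ (p i + p j) * φ₂ j q') • gradient b q'.1) (x, t)
      = -(divx (fun q' => (((1 : ℝ) / ((p i : ℝ) + (p j : ℝ) + 1)) * (h₂ + ζ q' - b q'.1) ^ (p i + p j + 1)) • gradx (φ₂ j) q' - (((p j : ℝ) / ((p i : ℝ) + (p j : ℝ))) * (h₂ + ζ q' - b q'.1) ^ (p i + p j) * φ₂ j q') • gradient b q'.1) (x, t)) := by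
    intro i j
    rw [divx_congr (show ∀ q',
        (-((1 : ℝ) / ((p i : ℝ) + (p j : ℝ) + 1)) * (h₂ + ζ q' - b q'.1) ^ (p i + p j + 1)) • gradx (φ₂ j) q'
          + ((p j : ℝ) / ((p i : ℝ) + (p j : ℝ)) * (h₂ + ζ q' - b q'.1) ^ (p i + p j) * φ₂ j q') • gradient b q'.1
        = -((((1 : ℝ) / ((p i : ℝ) + (p j : ℝ) + 1) * (h₂ + ζ q' - b q'.1) ^ (p i + p j + 1)) • gradx (φ₂ j) q'
          - ((p j : ℝ) / ((p i : ℝ) + (p j : ℝ)) * (h₂ + ζ q' - b q'.1) ^ (p i + p j) * φ₂ j q') • gradient b q'.1)) from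
        fun q' => by rw [neg_mul, neg_smul, neg_sub, neg_add_eq_sub]) (x, t),
      divx_neg (x, t) (diffAt_sliceX (hsW2 i j) x t)]
  have hT1val : ∀ i j : Fin (N + 1), divx (fun q' =>
      pt (φ₁ i) q' • ((-((1 : ℝ) / (2 * ((i : ℕ) + (j : ℕ)) + 1)) * (h₁ - ζ q') ^ (2 * ((i : ℕ) + (j : ℕ)) + 1)) • gradx (φ₁ j) q')) (x, t)
      = -((1 : ℝ) / (2 * ((i : ℕ) + (j : ℕ)) + 1) * (h₁ - ζ (x, t)) ^ (2 * ((i : ℕ) + (j : ℕ)) + 1) * (∑ l, gradx (pt (φ₁ i)) (x, t) l * gradx (φ₁ j) (x, t) l)) + pt (φ₁ i) (x, t) * -(divx (fun q' => (((1 : ℝ) / (2 * ((i : ℕ) + (j : ℕ)) + 1)) * (h₁ - ζ q') ^ (2 * ((i : ℕ) + (j : ℕ)) + 1)) • gradx (φ₁ j) q') (x, t)) := by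
    intro i j
    rw [divx_smul (x, t) (diffAt_sliceX (contDiff_pt (hφ₁ i)) x t)
        (diffAt_sliceX (hsV1 i j) x t), hV1div i j]
    congr 1
    simp only [hfds1, PiLp.smul_apply, smul_eq_mul]
    rw [Finset.mul_sum, ← Finset.sum_neg_distrib]
    exact Finset.sum_congr rfl fun l _ => by ring
  have hT2val : ∀ i j : Fin (Ns + 1), divx (fun q' =>
      pt (φ₂ i) q' • ((-((1 : ℝ) / ((p i : ℝ) + (p j : ℝ) + 1)) * (h₂ + ζ q' - b q'.1) ^ (p i + p j + 1)) • gradx (φ₂ j) q'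
        + ((p j : ℝ) / ((p i : ℝ) + (p j : ℝ)) * (h₂ + ζ q' - b q'.1) ^ (p i + p j) * φ₂ j q') • gradient b q'.1)) (x, t)
      = -((1 : ℝ) / ((p i : ℝ) + (p j : ℝ) + 1) * (h₂ + ζ (x, t) - b x) ^ (p i + p j + 1) * (∑ l, gradx (pt (φ₂ i)) (x, t) l * gradx (φ₂ j) (x, t) l))
        + (p j : ℝ) / ((p i : ℝ) + (p j : ℝ)) * (h₂ + ζ (x, t) - b x) ^ (p i + p j) * (φ₂ j (x, t) * (∑ l, gradient b x l * gradx (pt (φ₂ i)) (x, t) l))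
        + pt (φ₂ i) (x, t) * -(divx (fun q' => (((1 : ℝ) / ((p i : ℝ) + (p j : ℝ) + 1)) * (h₂ + ζ q' - b q'.1) ^ (p i + p j + 1)) • gradx (φ₂ j) q' - (((p j : ℝ) / ((p i : ℝ) + (p j : ℝ))) * (h₂ + ζ q' - b q'.1) ^ (p i + p j) * φ₂ j q') • gradient b q'.1) (x, t)) := by
    intro i j
    rw [divx_smul (x, t) (diffAt_sliceX (contDiff_pt (hφ₂ i)) x t)
        (diffAt_sliceX (hsV2 i j) x t), hV2div i j]
    rw [add_assoc]
    congr 1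
    simp only [hfds2, PiLp.add_apply, PiLp.smul_apply, smul_eq_mul]
    rw [Finset.mul_sum, Finset.mul_sum, Finset.mul_sum, ← Finset.sum_neg_distrib,
      ← Finset.sum_add_distrib]
    exact Finset.sum_congr rfl fun l _ => by ring
  have hDXeq : divx fK (x, t) = ρ₁ * (∑ i : Fin (N + 1), ∑ j : Fin (N + 1),
      (-((1 : ℝ) / (2 * ((i : ℕ) + (j : ℕ)) + 1) * (h₁ - ζ (x, t)) ^ (2 * ((i : ℕ) + (j : ℕ)) + 1) * (∑ l, gradx (pt (φ₁ i)) (x, t) l * gradx (φ₁ j) (x, t) l)) + pt (φ₁ i) (x, t) * -(divx (fun q' => (((1 : ℝ) / (2 * ((i : ℕ) + (j : ℕ)) + 1)) * (h₁ - ζ q') ^ (2 * ((i : ℕ) + (j : ℕ)) + 1)) • gradx (φ₁ j) q') (x, t))))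
    + ρ₂ * (∑ i : Fin (Ns + 1), ∑ j : Fin (Ns + 1),
      (-((1 : ℝ) / ((p i : ℝ) + (p j : ℝ) + 1) * (h₂ + ζ (x, t) - b x) ^ (p i + p j + 1) * (∑ l, gradx (pt (φ₂ i)) (x, t) l * gradx (φ₂ j) (x, t) l))
        + (p j : ℝ) / ((p i : ℝ) + (p j : ℝ)) * (h₂ + ζ (x, t) - b x) ^ (p i + p j) * (φ₂ j (x, t) * (∑ l, gradient b x l * gradx (pt (φ₂ i)) (x, t) l))
        + pt (φ₂ i) (x, t) * -(divx (fun q' => (((1 : ℝ) / ((p i : ℝ) + (p j : ℝ) + 1)) * (h₂ + ζ q' - b q'.1) ^ (p i + p j + 1)) • gradx (φ₂ j) q' - (((p j : ℝ) / ((p i : ℝ) + (p j : ℝ))) * (h₂ + ζ q' - b q'.1) ^ (p i + p j) * φ₂ j q') • gradient b q'.1) (x, t)))) := by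
    rw [divx_congr hfK (x, t),
      divx_add (x, t)
        (diffAt_sliceX (contDiff_const.fun_smul (ContDiff.sum fun (i : Fin (N+1)) _ =>
          ContDiff.sum fun (j : Fin (N+1)) _ => (contDiff_pt (hφ₁ i)).fun_smul (hsV1 i j))) x t)
        (diffAt_sliceX (contDiff_const.fun_smul (ContDiff.sum fun (i : Fin (Ns+1)) _ =>
          ContDiff.sum fun (j : Fin (Ns+1)) _ => (contDiff_pt (hφ₂ i)).fun_smul (hsV2 i j))) x t),
      divx_const_smul ρ₁ (x, t) (diffAt_sliceX (ContDiff.sum fun (i : Fin (N+1)) _ =>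
        ContDiff.sum fun (j : Fin (N+1)) _ => (contDiff_pt (hφ₁ i)).fun_smul (hsV1 i j)) x t),
      divx_const_smul ρ₂ (x, t) (diffAt_sliceX (ContDiff.sum fun (i : Fin (Ns+1)) _ =>
        ContDiff.sum fun (j : Fin (Ns+1)) _ => (contDiff_pt (hφ₂ i)).fun_smul (hsV2 i j)) x t),
      divx_sum (x, t) (fun (i : Fin (N+1)) _ => diffAt_sliceX (ContDiff.sum fun (j : Fin (N+1)) _ =>
        (contDiff_pt (hφ₁ i)).fun_smul (hsV1 i j)) x t),
      divx_sum (x, t) (fun (i : Fin (Ns+1)) _ => diffAt_sliceX (ContDiff.sum fun (j : Fin (Ns+1)) _ =>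
        (contDiff_pt (hφ₂ i)).fun_smul (hsV2 i j)) x t)]
    congr 1
    · congr 1
      refine Finset.sum_congr rfl fun i _ => ?_
      rw [divx_sum (x, t) (fun (j : Fin (N+1)) _ => diffAt_sliceX
        ((contDiff_pt (hφ₁ i)).fun_smul (hsV1 i j)) x t)]
      exact Finset.sum_congr rfl fun j _ => hT1val i j
    · congr 1
      refine Finset.sum_congr rfl fun i _ => ?_
      rw [divx_sum (x, t) (fun (j : Fin (Ns+1)) _ => diffAt_sliceX
        ((contDiff_pt (hφ₂ i)).fun_smul (hsV2 i j)) x t)]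
      exact Finset.sum_congr rfl fun j _ => hT2val i j
  -- STEP 3 : final assembly
  have hu₁e := funext hu₁
  have hu₂e := funext hu₂
  have hw₁e := funext hw₁
  have hw₂e := funext hw₂
  subst hu₁e hu₂e hw₁e hw₂e
  have hE3 := heq3 (x, t)
  simp only [] at hE3
  have hE1 : ∀ i : Fin (N + 1), (∑ j : Fin (N + 1), divx (fun q' => (((1 : ℝ) / (2 * ((i : ℕ) + (j : ℕ)) + 1)) * (h₁ - ζ q') ^ (2 * ((i : ℕ) + (j : ℕ)) + 1)) • gradx (φ₁ j) q') (x, t))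
      = (h₁ - ζ (x, t)) ^ (2 * (i : ℕ)) * pt ζ (x, t) + ∑ j : Fin (N + 1), (4 * (i : ℕ) * (j : ℕ) : ℝ) / ((2 * ((i : ℕ) + (j : ℕ)) : ℝ) - 1) * (h₁ - ζ (x, t)) ^ (2 * ((i : ℕ) + (j : ℕ)) - 1) * φ₁ j (x, t) := by
    intro i
    have h := heq1 (x, t) i
    rw [Finset.sum_sub_distrib] at h
    linarith
  have hE2 : ∀ i : Fin (Ns + 1), (∑ j : Fin (Ns + 1), divx (fun q' => (((1 : ℝ) / ((p i : ℝ) + (p j : ℝ) + 1)) * (h₂ + ζ q' - b q'.1) ^ (p i + p j + 1)) • gradx (φ₂ j) q' - (((p j : ℝ) / ((p i : ℝ) + (p j : ℝ))) * (h₂ + ζ q' - b q'.1) ^ (p i + p j) * φ₂ j q') • gradient b q'.1) (x, t))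
      = -((h₂ + ζ (x, t) - b x) ^ (p i) * pt ζ (x, t))
        - (∑ j : Fin (Ns + 1), (p i : ℝ) / ((p i : ℝ) + (p j : ℝ)) * (h₂ + ζ (x, t) - b x) ^ (p i + p j) * (∑ l, gradient b x l * gradx (φ₂ j) (x, t) l))
        + ∑ j : Fin (Ns + 1), (p i : ℝ) * (p j : ℝ) / ((p i : ℝ) + (p j : ℝ) - 1) * (h₂ + ζ (x, t) - b x) ^ (p i + p j - 1) * (1 + ‖gradient b x‖ ^ 2) * φ₂ j (x, t) := by
    intro i
    have h := heq2 (x, t) i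
    simp only [real_inner_eq_sum] at h
    rw [Finset.sum_sub_distrib, Finset.sum_add_distrib] at h
    linarith
  have hR2 : (∑ i : Fin (N + 1), ∑ j : Fin (N + 1), pt (φ₁ i) (x, t) * -(divx (fun q' => (((1 : ℝ) / (2 * ((i : ℕ) + (j : ℕ)) + 1)) * (h₁ - ζ q') ^ (2 * ((i : ℕ) + (j : ℕ)) + 1)) • gradx (φ₁ j) q') (x, t)))
      = -(pt ζ (x, t) * (∑ i : Fin (N + 1), (h₁ - ζ (x, t)) ^ (2 * (i : ℕ)) * pt (φ₁ i) (x, t))) - (∑ i : Fin (N + 1), ∑ j : Fin (N + 1), (4 * (i : ℕ) * (j : ℕ) : ℝ) / ((2 * ((i : ℕ) + (j : ℕ)) : ℝ) - 1) * (h₁ - ζ (x, t)) ^ (2 * ((i : ℕ) + (j : ℕ)) - 1) * (pt (φ₁ i) (x, t) * φ₁ j (x, t))) := by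
    calc (∑ i : Fin (N + 1), ∑ j : Fin (N + 1), pt (φ₁ i) (x, t) * -(divx (fun q' => (((1 : ℝ) / (2 * ((i : ℕ) + (j : ℕ)) + 1)) * (h₁ - ζ q') ^ (2 * ((i : ℕ) + (j : ℕ)) + 1)) • gradx (φ₁ j) q') (x, t)))
        = ∑ i : Fin (N + 1), pt (φ₁ i) (x, t) * -(∑ j : Fin (N + 1), divx (fun q' => (((1 : ℝ) / (2 * ((i : ℕ) + (j : ℕ)) + 1)) * (h₁ - ζ q') ^ (2 * ((i : ℕ) + (j : ℕ)) + 1)) • gradx (φ₁ j) q') (x, t)) :=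
          Finset.sum_congr rfl fun i _ => by
            rw [← Finset.mul_sum, Finset.sum_neg_distrib]
      _ = ∑ i : Fin (N + 1), (-(pt ζ (x, t) * ((h₁ - ζ (x, t)) ^ (2 * (i : ℕ)) * pt (φ₁ i) (x, t)))
            + ∑ j : Fin (N + 1), -((4 * (i : ℕ) * (j : ℕ) : ℝ) / ((2 * ((i : ℕ) + (j : ℕ)) : ℝ) - 1) * (h₁ - ζ (x, t)) ^ (2 * ((i : ℕ) + (j : ℕ)) - 1) * (pt (φ₁ i) (x, t) * φ₁ j (x, t)))) :=
          Finset.sum_congr rfl fun i _ => by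
            rw [hE1 i, mul_neg, mul_add, Finset.mul_sum, neg_add, ← Finset.sum_neg_distrib]
            exact congrArg₂ (· + ·) (by ring) (Finset.sum_congr rfl fun j _ => by ring)
      _ = -(pt ζ (x, t) * (∑ i : Fin (N + 1), (h₁ - ζ (x, t)) ^ (2 * (i : ℕ)) * pt (φ₁ i) (x, t))) - (∑ i : Fin (N + 1), ∑ j : Fin (N + 1), (4 * (i : ℕ) * (j : ℕ) : ℝ) / ((2 * ((i : ℕ) + (j : ℕ)) : ℝ) - 1) * (h₁ - ζ (x, t)) ^ (2 * ((i : ℕ) + (j : ℕ)) - 1) * (pt (φ₁ i) (x, t) * φ₁ j (x, t))) := by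
          simp only [Finset.sum_add_distrib, Finset.sum_neg_distrib, ← Finset.mul_sum]
          try ring
  have hR4 : (∑ i : Fin (Ns + 1), ∑ j : Fin (Ns + 1), pt (φ₂ i) (x, t) * -(divx (fun q' => (((1 : ℝ) / ((p i : ℝ) + (p j : ℝ) + 1)) * (h₂ + ζ q' - b q'.1) ^ (p i + p j + 1)) • gradx (φ₂ j) q' - (((p j : ℝ) / ((p i : ℝ) + (p j : ℝ))) * (h₂ + ζ q' - b q'.1) ^ (p i + p j) * φ₂ j q') • gradient b q'.1) (x, t)))
      = pt ζ (x, t) * (∑ i : Fin (Ns + 1), (h₂ + ζ (x, t) - b x) ^ (p i) * pt (φ₂ i) (x, t)) + (∑ i : Fin (Ns + 1), ∑ j : Fin (Ns + 1), (p i : ℝ) / ((p i : ℝ) + (p j : ℝ)) * (h₂ + ζ (x, t) - b x) ^ (p i + p j) * (pt (φ₂ i) (x, t) * (∑ l, gradient b x l * gradx (φ₂ j) (x, t) l))) - (∑ i : Fin (Ns + 1), ∑ j : Fin (Ns + 1), (p i : ℝ) * (p j : ℝ) / ((p i : ℝ) + (p j : ℝ) - 1) * (h₂ + ζ (x, t)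 - b x) ^ (p i + p j - 1) * (1 + ‖gradient b x‖ ^ 2) * (pt (φ₂ i) (x, t) * φ₂ j (x, t))) := by
    calc (∑ i : Fin (Ns + 1), ∑ j : Fin (Ns + 1), pt (φ₂ i) (x, t) * -(divx (fun q' => (((1 : ℝ) / ((p i : ℝ) + (p j : ℝ) + 1)) * (h₂ + ζ q' - b q'.1) ^ (p i + p j + 1)) • gradx (φ₂ j) q' - (((p j : ℝ) / ((p i : ℝ) + (p j : ℝ))) * (h₂ + ζ q' - b q'.1) ^ (p i + p j) * φ₂ j q') • gradient b q'.1) (x, t)))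
        = ∑ i : Fin (Ns + 1), pt (φ₂ i) (x, t) * -(∑ j : Fin (Ns + 1), divx (fun q' => (((1 : ℝ) / ((p i : ℝ) + (p j : ℝ) + 1)) * (h₂ + ζ q' - b q'.1) ^ (p i + p j + 1)) • gradx (φ₂ j) q' - (((p j : ℝ) / ((p i : ℝ) + (p j : ℝ))) * (h₂ + ζ q' - b q'.1) ^ (p i + p j) * φ₂ j q') • gradient b q'.1) (x, t)) :=
          Finset.sum_congr rfl fun i _ => by
            rw [← Finset.mul_sum, Finset.sum_neg_distrib]
      _ = ∑ i : Fin (Ns + 1), (pt ζ (x, t) * ((h₂ + ζ (x, t) - b x) ^ (p i) * pt (φ₂ i) (x, t))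
            + (∑ j : Fin (Ns + 1), (p i : ℝ) / ((p i : ℝ) + (p j : ℝ)) * (h₂ + ζ (x, t) - b x) ^ (p i + p j) * (pt (φ₂ i) (x, t) * (∑ l, gradient b x l * gradx (φ₂ j) (x, t) l)))
            - ∑ j : Fin (Ns + 1), (p i : ℝ) * (p j : ℝ) / ((p i : ℝ) + (p j : ℝ) - 1) * (h₂ + ζ (x, t) - b x) ^ (p i + p j - 1) * (1 + ‖gradient b x‖ ^ 2) * (pt (φ₂ i) (x, t) * φ₂ j (x, t))) :=
          Finset.sum_congr rfl fun i _ => by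
            rw [hE2 i, show ∀ X Y W : ℝ, -(-X - Y + W) = X + Y - W from fun _ _ _ => by ring,
              mul_sub, mul_add, Finset.mul_sum, Finset.mul_sum]
            exact congrArg₂ (· - ·) (congrArg₂ (· + ·) (by ring)
              (Finset.sum_congr rfl fun j _ => by ring))
              (Finset.sum_congr rfl fun j _ => by ring)
      _ = pt ζ (x, t) * (∑ i : Fin (Ns + 1), (h₂ + ζ (x, t) - b x) ^ (p i) * pt (φ₂ i) (x, t)) + (∑ i : Fin (Ns + 1), ∑ j : Fin (Ns + 1), (p i : ℝ) / ((p i : ℝ) + (p j : ℝ)) * (h₂ + ζ (x, t) - b x) ^ (p i + p j) * (pt (φ₂ i) (x, t) * (∑ l, gradient b x l * gradx (φ₂ j) (x, t) l))) - (∑ i : Fin (Ns + 1), ∑ j : Fin (Ns + 1), (p i : ℝ) * (p j : ℝ) / ((p i : ℝ) + (p j : ℝ) - 1) * (h₂ + ζ (x, t) - b x) ^ (p i + p j - 1) * (1 + ‖gradient b x‖ ^ 2) * (pt (φ₂ i) (x, t) * φ₂ j (x, t))) := by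
          simp only [Finset.sum_sub_distrib, Finset.sum_add_distrib, ← Finset.mul_sum]
          try ring
  have hP1f : (∑ i : Fin (N + 1), ∑ j : Fin (N + 1), -(pt ζ (x, t)) * ((h₁ - ζ (x, t)) ^ (2 * ((i : ℕ) + (j : ℕ))) * (∑ l, gradx (φ₁ i) (x, t) l * gradx (φ₁ j) (x, t) l))) = -(pt ζ (x, t)) * (∑ i : Fin (N + 1), ∑ j : Fin (N + 1), (h₁ - ζ (x, t)) ^ (2 * ((i : ℕ) + (j : ℕ))) * (∑ l, gradx (φ₁ i) (x, t) l * gradx (φ₁ j) (x, t) l)) := sum_sum_factor _ fun i j => rfl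
  have hP4f : (∑ i : Fin (N + 1), ∑ j : Fin (N + 1), -(pt ζ (x, t)) * ((4 * (i : ℕ) * (j : ℕ) : ℝ) * (h₁ - ζ (x, t)) ^ (2 * ((i : ℕ) + (j : ℕ)) - 2) * φ₁ i (x, t) * φ₁ j (x, t))) = -(pt ζ (x, t)) * (∑ i : Fin (N + 1), ∑ j : Fin (N + 1), (4 * (i : ℕ) * (j : ℕ) : ℝ) * (h₁ - ζ (x, t)) ^ (2 * ((i : ℕ) + (j : ℕ)) - 2) * φ₁ i (x, t) * φ₁ j (x, t)) := sum_sum_factor _ fun i j => rfl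
  have hQ1f : (∑ i : Fin (Ns + 1), ∑ j : Fin (Ns + 1), pt ζ (x, t) * ((h₂ + ζ (x, t) - b x) ^ (p i + p j) * (∑ l, gradx (φ₂ i) (x, t) l * gradx (φ₂ j) (x, t) l))) = pt ζ (x, t) * (∑ i : Fin (Ns + 1), ∑ j : Fin (Ns + 1), (h₂ + ζ (x, t) - b x) ^ (p i + p j) * (∑ l, gradx (φ₂ i) (x, t) l * gradx (φ₂ j) (x, t) l)) := sum_sum_factor _ fun i j => rfl
  have hQ4f : (∑ i : Fin (Ns + 1), ∑ j : Fin (Ns + 1), pt ζ (x, t) * (2 * (p i : ℝ) * (h₂ + ζ (x, t) - b x) ^ (p i + p j - 1) * φ₂ i (x, t) * (∑ l, gradient b x l * gradx (φ₂ j) (x, t) l))) = pt ζ (x, t) * (∑ i : Fin (Ns + 1), ∑ j : Fin (Ns + 1), 2 * (p i : ℝ) * (h₂ + ζ (x, t) - b x) ^ (p i + p j - 1) * φ₂ i (x, t) * (∑ l, gradient b x l * gradx (φ₂ j) (x, t) l)) := sum_sum_factor _ fun i j => rfl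
  have hQ7f : (∑ i : Fin (Ns + 1), ∑ j : Fin (Ns + 1), pt ζ (x, t) * ((p i : ℝ) * (p j : ℝ) * (h₂ + ζ (x, t) - b x) ^ (p i + p j - 2) * (1 + ‖gradient b x‖ ^ 2) * φ₂ i (x, t) * φ₂ j (x, t))) = pt ζ (x, t) * (∑ i : Fin (Ns + 1), ∑ j : Fin (Ns + 1), (p i : ℝ) * (p j : ℝ) * (h₂ + ζ (x, t) - b x) ^ (p i + p j - 2) * (1 + ‖gradient b x‖ ^ 2) * φ₂ i (x, t) * φ₂ j (x, t)) := sum_sum_factor _ fun i j => rfl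
  have hP3s : (∑ i : Fin (N + 1), ∑ j : Fin (N + 1), (1 : ℝ) / (2 * ((i : ℕ) + (j : ℕ)) + 1) * (h₁ - ζ (x, t)) ^ (2 * ((i : ℕ) + (j : ℕ)) + 1) * (∑ l, gradx (φ₁ i) (x, t) l * gradx (pt (φ₁ j)) (x, t) l)) = (∑ i : Fin (N + 1), ∑ j : Fin (N + 1), (1 : ℝ) / (2 * ((i : ℕ) + (j : ℕ)) + 1) * (h₁ - ζ (x, t)) ^ (2 * ((i : ℕ) + (j : ℕ)) + 1) * (∑ l, gradx (pt (φ₁ i)) (x, t) l * gradx (φ₁ j) (x, t) l)) := sum_sum_swap fun i j => by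
    rw [show (j : ℕ) + (i : ℕ) = (i : ℕ) + (j : ℕ) from Nat.add_comm _ _, show ((j : ℕ) : ℝ) + ((i : ℕ) : ℝ) = ((i : ℕ) : ℝ) + ((j : ℕ) : ℝ) from add_comm _ _, show (∑ l, gradx (φ₁ j) (x, t) l * gradx (pt (φ₁ i)) (x, t) l)
      = ∑ l, gradx (pt (φ₁ i)) (x, t) l * gradx (φ₁ j) (x, t) l from
      Finset.sum_congr rfl fun l _ => mul_comm _ _]
    try ring
  have hP6s : (∑ i : Fin (N + 1), ∑ j : Fin (N + 1), (4 * (i : ℕ) * (j : ℕ) : ℝ) / ((2 * ((i : ℕ) + (j : ℕ)) : ℝ) - 1) * (h₁ - ζ (x, t)) ^ (2 * ((i : ℕ) + (j : ℕ)) - 1) * (φ₁ i (x, t) * pt (φ₁ j) (x, t))) = (∑ i : Fin (N + 1), ∑ j : Fin (N + 1), (4 * (i : ℕ) * (j : ℕ) : ℝ) / ((2 * ((i : ℕ) + (j : ℕ)) : ℝ) - 1) * (h₁ - ζ (x, t)) ^ (2 * ((i : ℕ) + (j : ℕ)) - 1) * (pt (φ₁ i) (x, t) * φ₁ j (x, t)))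 := sum_sum_swap fun i j => by
    rw [show (j : ℕ) + (i : ℕ) = (i : ℕ) + (j : ℕ) from Nat.add_comm _ _, show ((j : ℕ) : ℝ) + ((i : ℕ) : ℝ) = ((i : ℕ) : ℝ) + ((j : ℕ) : ℝ) from add_comm _ _]; ring
  have hQ3s : (∑ i : Fin (Ns + 1), ∑ j : Fin (Ns + 1), (1 : ℝ) / ((p i : ℝ) + (p j : ℝ) + 1) * (h₂ + ζ (x, t) - b x) ^ (p i + p j + 1) * (∑ l, gradx (φ₂ i) (x, t) l * gradx (pt (φ₂ j)) (x, t) l)) = (∑ i : Fin (Ns + 1), ∑ j : Fin (Ns + 1), (1 : ℝ) / ((p i : ℝ) + (p j : ℝ) + 1) * (h₂ + ζ (x, t) - b x) ^ (p i + p j + 1) * (∑ l, gradx (pt (φ₂ i)) (x, t) l * gradx (φ₂ j) (x, t) l)) := sum_sum_swap fun i j => by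
    rw [show p j + p i = p i + p j from Nat.add_comm _ _, show (p j : ℝ) + (p i : ℝ) = (p i : ℝ) + (p j : ℝ) from add_comm _ _, show (∑ l, gradx (φ₂ j) (x, t) l * gradx (pt (φ₂ i)) (x, t) l)
      = ∑ l, gradx (pt (φ₂ i)) (x, t) l * gradx (φ₂ j) (x, t) l from
      Finset.sum_congr rfl fun l _ => mul_comm _ _]
    try ring
  have hQ9s : (∑ i : Fin (Ns + 1), ∑ j : Fin (Ns + 1), (p i : ℝ) * (p j : ℝ) / ((p i : ℝ) + (p j : ℝ) - 1) * (h₂ + ζ (x, t) - b x) ^ (p i + p j - 1) * (1 + ‖gradient b x‖ ^ 2) * (φ₂ i (x, t) * pt (φ₂ j) (x, t))) = (∑ i : Fin (Ns + 1), ∑ j : Fin (Ns + 1), (p i : ℝ) * (p j : ℝ) / ((p i : ℝ) + (p j : ℝ) - 1) * (h₂ + ζ (x, t) - b x) ^ (p i + p j - 1) * (1 + ‖gradient b x‖ ^ 2) * (pt (φ₂ i) (x, t) * φ₂ j (x, t))) := sum_sum_swap fun i j => by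
    rw [show p j + p i = p i + p j from Nat.add_comm _ _, show (p j : ℝ) + (p i : ℝ) = (p i : ℝ) + (p j : ℝ) from add_comm _ _]; ring
  have hQ5 : (∑ i : Fin (Ns + 1), ∑ j : Fin (Ns + 1), 2 * (p i : ℝ) / ((p i : ℝ) + (p j : ℝ)) * (h₂ + ζ (x, t) - b x) ^ (p i + p j) * (pt (φ₂ i) (x, t) * (∑ l, gradient b x l * gradx (φ₂ j) (x, t) l))) = (∑ i : Fin (Ns + 1), ∑ j : Fin (Ns + 1), (p i : ℝ) / ((p i : ℝ) + (p j : ℝ)) * (h₂ + ζ (x, t) - b x) ^ (p i + p j) * (pt (φ₂ i) (x, t) * (∑ l, gradient b x l * gradx (φ₂ j) (x, t) l))) + (∑ i : Fin (Ns + 1), ∑ j : Fin (Ns + 1), (p i : ℝ) / ((p i : ℝ) + (p j : ℝ)) * (h₂ + ζ (x, t) - b x) ^ (p i + p j) * (pt (φ₂ i) (x, t) * (∑ l, gradient b x l * gradx (φ₂ j) (x, t) l))) := by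
    calc (∑ i : Fin (Ns + 1), ∑ j : Fin (Ns + 1), 2 * (p i : ℝ) / ((p i : ℝ) + (p j : ℝ)) * (h₂ + ζ (x, t) - b x) ^ (p i + p j) * (pt (φ₂ i) (x, t) * (∑ l, gradient b x l * gradx (φ₂ j) (x, t) l))) = ∑ i : Fin (Ns + 1), ∑ j : Fin (Ns + 1),
          ((p i : ℝ) / ((p i : ℝ) + (p j : ℝ)) * (h₂ + ζ (x, t) - b x) ^ (p i + p j) * (pt (φ₂ i) (x, t) * (∑ l, gradient b x l * gradx (φ₂ j) (x, t) l))
            + (p i : ℝ) / ((p i : ℝ) + (p j : ℝ)) * (h₂ + ζ (x, t) - b x) ^ (p i + p j) * (pt (φ₂ i) (x, t) * (∑ l, gradient b x l * gradx (φ₂ j) (x, t) l))) :=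
          sum_sum_congr' fun i j => by ring
      _ = (∑ i : Fin (Ns + 1), ∑ j : Fin (Ns + 1), (p i : ℝ) / ((p i : ℝ) + (p j : ℝ)) * (h₂ + ζ (x, t) - b x) ^ (p i + p j) * (pt (φ₂ i) (x, t) * (∑ l, gradient b x l * gradx (φ₂ j) (x, t) l))) + (∑ i : Fin (Ns + 1), ∑ j : Fin (Ns + 1), (p i : ℝ) / ((p i : ℝ) + (p j : ℝ)) * (h₂ + ζ (x, t) - b x) ^ (p i + p j) * (pt (φ₂ i) (x, t) * (∑ l, gradient b x l * gradx (φ₂ j) (x, t) l))) := by simp only [Finset.sum_add_distrib]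
  have hQ6 : (∑ i : Fin (Ns + 1), ∑ j : Fin (Ns + 1), 2 * (p i : ℝ) / ((p i : ℝ) + (p j : ℝ)) * (h₂ + ζ (x, t) - b x) ^ (p i + p j) * (φ₂ i (x, t) * (∑ l, gradient b x l * gradx (pt (φ₂ j)) (x, t) l))) = (∑ i : Fin (Ns + 1), ∑ j : Fin (Ns + 1), (p j : ℝ) / ((p i : ℝ) + (p j : ℝ)) * (h₂ + ζ (x, t) - b x) ^ (p i + p j) * (φ₂ j (x, t) * (∑ l, gradient b x l * gradx (pt (φ₂ i)) (x, t) l))) + (∑ i : Fin (Ns + 1), ∑ j : Fin (Ns + 1), (p j : ℝ) / ((p i : ℝ) + (p j : ℝ)) * (h₂ + ζ (x, t) - b x) ^ (p i + p j) * (φ₂ j (x, t) * (∑ l, gradient b x l * gradx (pt (φ₂ i)) (x, t) l))) := by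
    calc (∑ i : Fin (Ns + 1), ∑ j : Fin (Ns + 1), 2 * (p i : ℝ) / ((p i : ℝ) + (p j : ℝ)) * (h₂ + ζ (x, t) - b x) ^ (p i + p j) * (φ₂ i (x, t) * (∑ l, gradient b x l * gradx (pt (φ₂ j)) (x, t) l))) = ∑ i : Fin (Ns + 1), ∑ j : Fin (Ns + 1),
          ((p j : ℝ) / ((p i : ℝ) + (p j : ℝ)) * (h₂ + ζ (x, t) - b x) ^ (p i + p j) * (φ₂ j (x, t) * (∑ l, gradient b x l * gradx (pt (φ₂ i)) (x, t) l))
            + (p j : ℝ) / ((p i : ℝ) + (p j : ℝ)) * (h₂ + ζ (x, t) - b x) ^ (p i + p j) * (φ₂ j (x, t) * (∑ l, gradient b x l * gradx (pt (φ₂ i)) (x, t) l))) :=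
          sum_sum_swap fun i j => by rw [show p j + p i = p i + p j from Nat.add_comm _ _, show (p j : ℝ) + (p i : ℝ) = (p i : ℝ) + (p j : ℝ) from add_comm _ _]; ring
      _ = (∑ i : Fin (Ns + 1), ∑ j : Fin (Ns + 1), (p j : ℝ) / ((p i : ℝ) + (p j : ℝ)) * (h₂ + ζ (x, t) - b x) ^ (p i + p j) * (φ₂ j (x, t) * (∑ l, gradient b x l * gradx (pt (φ₂ i)) (x, t) l))) + (∑ i : Fin (Ns + 1), ∑ j : Fin (Ns + 1), (p j : ℝ) / ((p i : ℝ) + (p j : ℝ)) * (h₂ + ζ (x, t) - b x) ^ (p i + p j) * (φ₂ j (x, t) * (∑ l, gradient b x l * gradx (pt (φ₂ i)) (x, t) l))) := by simp only [Finset.sum_add_distrib]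
  have hR1 : (∑ i : Fin (N + 1), ∑ j : Fin (N + 1), -((1 : ℝ) / (2 * ((i : ℕ) + (j : ℕ)) + 1) * (h₁ - ζ (x, t)) ^ (2 * ((i : ℕ) + (j : ℕ)) + 1) * (∑ l, gradx (pt (φ₁ i)) (x, t) l * gradx (φ₁ j) (x, t) l))) = -(∑ i : Fin (N + 1), ∑ j : Fin (N + 1), (1 : ℝ) / (2 * ((i : ℕ) + (j : ℕ)) + 1) * (h₁ - ζ (x, t)) ^ (2 * ((i : ℕ) + (j : ℕ)) + 1) * (∑ l, gradx (pt (φ₁ i)) (x, t) l * gradx (φ₁ j) (x, t) l)) := by simp only [Finset.sum_neg_distrib]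
  have hR3 : (∑ i : Fin (Ns + 1), ∑ j : Fin (Ns + 1), -((1 : ℝ) / ((p i : ℝ) + (p j : ℝ) + 1) * (h₂ + ζ (x, t) - b x) ^ (p i + p j + 1) * (∑ l, gradx (pt (φ₂ i)) (x, t) l * gradx (φ₂ j) (x, t) l))) = -(∑ i : Fin (Ns + 1), ∑ j : Fin (Ns + 1), (1 : ℝ) / ((p i : ℝ) + (p j : ℝ) + 1) * (h₂ + ζ (x, t) - b x) ^ (p i + p j + 1) * (∑ l, gradx (pt (φ₂ i)) (x, t) l * gradx (φ₂ j) (x, t) l)) := by simp only [Finset.sum_neg_distrib]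
  have hnB : ‖gradient b x‖ ^ 2 = (∑ l, gradient b x l * gradient b x l) := by
    rw [norm_sq_eq_sum']
    exact Finset.sum_congr rfl fun l _ => by ring
  have hY3 : (∑ i : Fin (Ns + 1), ∑ j : Fin (Ns + 1), 2 * (p i : ℝ) * (h₂ + ζ (x, t) - b x) ^ (p i + p j - 1) * φ₂ i (x, t) * (∑ l, gradient b x l * gradx (φ₂ j) (x, t) l)) = (∑ i : Fin (Ns + 1), ∑ j : Fin (Ns + 1), (p i : ℝ) * (h₂ + ζ (x, t) - b x) ^ (p i + p j - 1) * (φ₂ i (x, t) * (∑ l, gradient b x l * gradx (φ₂ j) (x, t) l))) + (∑ i : Fin (Ns + 1), ∑ j : Fin (Ns + 1), (p i : ℝ) * (h₂ + ζ (x, t) - b x) ^ (p i + p j - 1) * (φ₂ i (x, t) * (∑ l, gradient b x l * gradx (φ₂ j) (x, t) l))) := by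
    calc (∑ i : Fin (Ns + 1), ∑ j : Fin (Ns + 1), 2 * (p i : ℝ) * (h₂ + ζ (x, t) - b x) ^ (p i + p j - 1) * φ₂ i (x, t) * (∑ l, gradient b x l * gradx (φ₂ j) (x, t) l)) = ∑ i : Fin (Ns + 1), ∑ j : Fin (Ns + 1),
          ((p i : ℝ) * (h₂ + ζ (x, t) - b x) ^ (p i + p j - 1) * (φ₂ i (x, t) * (∑ l, gradient b x l * gradx (φ₂ j) (x, t) l)) + (p i : ℝ) * (h₂ + ζ (x, t) - b x) ^ (p i + p j - 1) * (φ₂ i (x, t) * (∑ l, gradient b x l * gradx (φ₂ j) (x, t) l))) :=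
          sum_sum_congr' fun i j => by ring
      _ = (∑ i : Fin (Ns + 1), ∑ j : Fin (Ns + 1), (p i : ℝ) * (h₂ + ζ (x, t) - b x) ^ (p i + p j - 1) * (φ₂ i (x, t) * (∑ l, gradient b x l * gradx (φ₂ j) (x, t) l))) + (∑ i : Fin (Ns + 1), ∑ j : Fin (Ns + 1), (p i : ℝ) * (h₂ + ζ (x, t) - b x) ^ (p i + p j - 1) * (φ₂ i (x, t) * (∑ l, gradient b x l * gradx (φ₂ j) (x, t) l))) := by simp only [Finset.sum_add_distrib]
  have hY5 : (∑ i : Fin (Ns + 1), ∑ j : Fin (Ns + 1), (p i : ℝ) * (p j : ℝ) * (h₂ + ζ (x, t) - b x) ^ (p i + p j - 2) * (1 + ‖gradient b x‖ ^ 2) * φ₂ i (x, t) * φ₂ j (x, t)) = (∑ i : Fin (Ns + 1), ∑ j : Fin (Ns + 1), (p i : ℝ) * (p j : ℝ) * (h₂ + ζ (x, t) - b x) ^ (p i + p j - 2) * (φ₂ i (x, t) * φ₂ j (x, t))) + (∑ i : Fin (Ns + 1), ∑ j : Fin (Ns + 1), (p i : ℝ) * (p j : ℝ) * (h₂ + ζ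 (x, t) - b x) ^ (p i + p j - 2) * (φ₂ i (x, t) * φ₂ j (x, t)) * (∑ l, gradient b x l * gradient b x l)) := by
    calc (∑ i : Fin (Ns + 1), ∑ j : Fin (Ns + 1), (p i : ℝ) * (p j : ℝ) * (h₂ + ζ (x, t) - b x) ^ (p i + p j - 2) * (1 + ‖gradient b x‖ ^ 2) * φ₂ i (x, t) * φ₂ j (x, t)) = ∑ i : Fin (Ns + 1), ∑ j : Fin (Ns + 1),
          ((p i : ℝ) * (p j : ℝ) * (h₂ + ζ (x, t) - b x) ^ (p i + p j - 2) * (φ₂ i (x, t) * φ₂ j (x, t))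
            + (p i : ℝ) * (p j : ℝ) * (h₂ + ζ (x, t) - b x) ^ (p i + p j - 2) * (φ₂ i (x, t) * φ₂ j (x, t)) * (∑ l, gradient b x l * gradient b x l)) :=
          sum_sum_congr' fun i j => by rw [hnB]; ring
      _ = (∑ i : Fin (Ns + 1), ∑ j : Fin (Ns + 1), (p i : ℝ) * (p j : ℝ) * (h₂ + ζ (x, t) - b x) ^ (p i + p j - 2) * (φ₂ i (x, t) * φ₂ j (x, t))) + (∑ i : Fin (Ns + 1), ∑ j : Fin (Ns + 1), (p i : ℝ) * (p j : ℝ) * (h₂ + ζ (x, t) - b x) ^ (p i + p j - 2) * (φ₂ i (x, t) * φ₂ j (x, t)) * (∑ l, gradient b x l * gradient b x l)) := by simp only [Finset.sum_add_distrib]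
  have hU1 : ‖∑ j : Fin (N + 1), (h₁ - ζ (x, t)) ^ (2 * (j : ℕ)) • gradx (φ₁ j) (x, t)‖ ^ 2 = (∑ i : Fin (N + 1), ∑ j : Fin (N + 1), (h₁ - ζ (x, t)) ^ (2 * ((i : ℕ) + (j : ℕ))) * (∑ l, gradx (φ₁ i) (x, t) l * gradx (φ₁ j) (x, t) l)) := by
    rw [norm_sq_eq_sum']
    calc (∑ l, (∑ j : Fin (N + 1), (h₁ - ζ (x, t)) ^ (2 * (j : ℕ)) • gradx (φ₁ j) (x, t)) l ^ 2)
        = ∑ l, ∑ i : Fin (N + 1), ∑ j : Fin (N + 1), ((h₁ - ζ (x, t)) ^ (2 * (i : ℕ)) * gradx (φ₁ i) (x, t) l) * ((h₁ - ζ (x, t)) ^ (2 * (j : ℕ)) * gradx (φ₁ j) (x, t) l) := by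
          refine Finset.sum_congr rfl fun l _ => ?_
          rw [sq]
          simp only [euclid_sum_apply, PiLp.smul_apply, smul_eq_mul]
          rw [Finset.sum_mul_sum]
      _ = ∑ i : Fin (N + 1), ∑ j : Fin (N + 1), ∑ l, ((h₁ - ζ (x, t)) ^ (2 * (i : ℕ)) * gradx (φ₁ i) (x, t) l) * ((h₁ - ζ (x, t)) ^ (2 * (j : ℕ)) * gradx (φ₁ j) (x, t) l) := by
          rw [Finset.sum_comm]
          exact Finset.sum_congr rfl fun i _ => Finset.sum_comm
      _ = (∑ i : Fin (N + 1), ∑ j : Fin (N + 1), (h₁ - ζ (x, t)) ^ (2 * ((i : ℕ) + (j : ℕ))) * (∑ l, gradx (φ₁ i) (x, t) l * gradx (φ₁ j) (x, t) l)) := by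
          refine sum_sum_congr' fun i j => ?_
          rw [Finset.mul_sum]
          refine Finset.sum_congr rfl fun l _ => ?_
          rw [show 2 * ((i : ℕ) + (j : ℕ)) = 2 * (i : ℕ) + 2 * (j : ℕ) from by ring, pow_add]
          ring
  have hW1 : (-∑ j : Fin (N + 1), (2 * (j : ℕ) : ℝ) * (h₁ - ζ (x, t)) ^ (2 * (j : ℕ) - 1) * φ₁ j (x, t)) ^ 2
      = (∑ i : Fin (N + 1), ∑ j : Fin (N + 1), (4 * (i : ℕ) * (j : ℕ) : ℝ) * (h₁ - ζ (x, t)) ^ (2 * ((i : ℕ) + (j : ℕ)) - 2) * φ₁ i (x, t) * φ₁ j (x, t)) := by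
    rw [neg_sq, sq, Finset.sum_mul_sum]
    exact sum_sum_congr' fun i j => w1_term _ _ _ _ _
  have hU2 : ‖∑ j : Fin (Ns + 1), ((h₂ + ζ (x, t) - b x) ^ (p j) • gradx (φ₂ j) (x, t)
      - ((p j : ℝ) * (h₂ + ζ (x, t) - b x) ^ (p j - 1) * φ₂ j (x, t)) • gradient b x)‖ ^ 2
      = (∑ i : Fin (Ns + 1), ∑ j : Fin (Ns + 1), (h₂ + ζ (x, t) - b x) ^ (p i + p j) * (∑ l, gradx (φ₂ i) (x, t) l * gradx (φ₂ j) (x, t) l)) - (∑ i : Fin (Ns + 1), ∑ j : Fin (Ns + 1), (p i : ℝ) * (h₂ + ζ (x, t) - b x) ^ (p i + p j - 1) * (φ₂ i (x, t) * (∑ l, gradient b x l * gradx (φ₂ j) (x, t) l))) - (∑ i : Fin (Ns + 1), ∑ j : Fin (Ns + 1), (p i : ℝ) * (h₂ + ζ (x, t) - b x) ^ (p i + p j - 1) * (φ₂ i (x, t) * (∑ l, gradient b x l * gradx (φ₂ j) (x, t) l))) + (∑ i : Fin (Ns + 1), ∑ j : Fin (Ns + 1), (p i : ℝ) * (p j :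 ℝ) * (h₂ + ζ (x, t) - b x) ^ (p i + p j - 2) * (φ₂ i (x, t) * φ₂ j (x, t)) * (∑ l, gradient b x l * gradient b x l)) := by
    rw [norm_sq_eq_sum']
    calc (∑ l, (∑ j : Fin (Ns + 1), ((h₂ + ζ (x, t) - b x) ^ (p j) • gradx (φ₂ j) (x, t)
          - ((p j : ℝ) * (h₂ + ζ (x, t) - b x) ^ (p j - 1) * φ₂ j (x, t)) • gradient b x)) l ^ 2)
        = ∑ l, ∑ i : Fin (Ns + 1), ∑ j : Fin (Ns + 1), ((h₂ + ζ (x, t) - b x) ^ (p i) * gradx (φ₂ i) (x, t) l - (p i : ℝ) * (h₂ + ζ (x, t) - b x) ^ (p i - 1) * φ₂ i (x, t) * gradient b x l) * ((h₂ + ζ (x, t) - b x) ^ (p j) * gradx (φ₂ j) (x, t) l - (p j : ℝ) * (h₂ + ζ (x, t) - b x) ^ (p j - 1) * φ₂ j (x, t) * gradient b x l) := by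
          refine Finset.sum_congr rfl fun l _ => ?_
          rw [sq]
          simp only [euclid_sum_apply, PiLp.sub_apply, PiLp.smul_apply, smul_eq_mul]
          rw [Finset.sum_mul_sum]
      _ = ∑ i : Fin (Ns + 1), ∑ j : Fin (Ns + 1), ∑ l, ((h₂ + ζ (x, t) - b x) ^ (p i) * gradx (φ₂ i) (x, t) l - (p i : ℝ) * (h₂ + ζ (x, t) - b x) ^ (p i - 1) * φ₂ i (x, t) * gradient b x l) * ((h₂ + ζ (x, t) - b x) ^ (p j) * gradx (φ₂ j) (x, t) l - (p j : ℝ) * (h₂ + ζ (x, t) - b x) ^ (p j - 1) * φ₂ j (x, t) * gradient b x l) := by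
          rw [Finset.sum_comm]
          exact Finset.sum_congr rfl fun i _ => Finset.sum_comm
      _ = ∑ i : Fin (Ns + 1), ∑ j : Fin (Ns + 1),
            ((h₂ + ζ (x, t) - b x) ^ (p i + p j) * (∑ l, gradx (φ₂ i) (x, t) l * gradx (φ₂ j) (x, t) l) - (p j : ℝ) * (h₂ + ζ (x, t) - b x) ^ (p i + p j - 1) * (φ₂ j (x, t) * (∑ l, gradient b x l * gradx (φ₂ i) (x, t) l))
              - (p i : ℝ) * (h₂ + ζ (x, t) - b x) ^ (p i + p j - 1) * (φ₂ i (x, t) * (∑ l, gradient b x l * gradx (φ₂ j) (x, t) l))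
              + (p i : ℝ) * (p j : ℝ) * (h₂ + ζ (x, t) - b x) ^ (p i + p j - 2) * (φ₂ i (x, t) * φ₂ j (x, t)) * (∑ l, gradient b x l * gradient b x l)) := by
          refine sum_sum_congr' fun i j => ?_
          calc (∑ l, ((h₂ + ζ (x, t) - b x) ^ (p i) * gradx (φ₂ i) (x, t) l - (p i : ℝ) * (h₂ + ζ (x, t) - b x) ^ (p i - 1) * φ₂ i (x, t) * gradient b x l) * ((h₂ + ζ (x, t) - b x) ^ (p j) * gradx (φ₂ j) (x, t) l - (p j : ℝ) * (h₂ + ζ (x, t) - b x) ^ (p j - 1) * φ₂ j (x, t) * gradient b x l))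
              = ∑ l, ((h₂ + ζ (x, t) - b x) ^ (p i + p j) * (gradx (φ₂ i) (x, t) l * gradx (φ₂ j) (x, t) l)
                - (p j : ℝ) * (h₂ + ζ (x, t) - b x) ^ (p i + p j - 1) * (φ₂ j (x, t) * (gradient b x l * gradx (φ₂ i) (x, t) l))
                - (p i : ℝ) * (h₂ + ζ (x, t) - b x) ^ (p i + p j - 1) * (φ₂ i (x, t) * (gradient b x l * gradx (φ₂ j) (x, t) l))
                + (p i : ℝ) * (p j : ℝ) * (h₂ + ζ (x, t) - b x) ^ (p i + p j - 2) * (φ₂ i (x, t) * φ₂ j (x, t)) * (gradient b x l * gradient b x l)) :=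
                Finset.sum_congr rfl fun l _ => prod_expand _ _ _ _ _ _ _ _
            _ = _ := by
                simp only [Finset.sum_sub_distrib, Finset.sum_add_distrib, ← Finset.mul_sum]
      _ = (∑ i : Fin (Ns + 1), ∑ j : Fin (Ns + 1), (h₂ + ζ (x, t) - b x) ^ (p i + p j) * (∑ l, gradx (φ₂ i) (x, t) l * gradx (φ₂ j) (x, t) l)) - (∑ i : Fin (Ns + 1), ∑ j : Fin (Ns + 1), (p i : ℝ) * (h₂ + ζ (x, t) - b x) ^ (p i + p j - 1) * (φ₂ i (x, t) * (∑ l, gradient b x l * gradx (φ₂ j) (x, t) l))) - (∑ i : Fin (Ns + 1), ∑ j : Fin (Ns + 1), (p i : ℝ) * (h₂ + ζ (x, t) - b x) ^ (p i + p j - 1) * (φ₂ i (x, t) * (∑ l, gradient b x l * gradx (φ₂ j) (x, t) l))) + (∑ i : Fin (Ns + 1), ∑ j : Fin (Ns + 1), (p i : ℝ) * (p j : ℝ) * (h₂ + ζ (x, t) - b x) ^ (p i + p j - 2) * (φ₂ i (x, t) * φ₂ j (x, t)) * (∑ l, gradient b x l * gradient b x l)) := by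
          simp only [Finset.sum_sub_distrib, Finset.sum_add_distrib]
          rw [show (∑ i : Fin (Ns + 1), ∑ j : Fin (Ns + 1), (p j : ℝ) * (h₂ + ζ (x, t) - b x) ^ (p i + p j - 1) * (φ₂ j (x, t) * (∑ l, gradient b x l * gradx (φ₂ i) (x, t) l))) = (∑ i : Fin (Ns + 1), ∑ j : Fin (Ns + 1), (p i : ℝ) * (h₂ + ζ (x, t) - b x) ^ (p i + p j - 1) * (φ₂ i (x, t) * (∑ l, gradient b x l * gradx (φ₂ j) (x, t) l))) from sum_sum_swap fun i j => by rw [show p j + p i = p i + p j from Nat.add_comm _ _]]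
  have hW2 : (∑ j : Fin (Ns + 1), (p j : ℝ) * (h₂ + ζ (x, t) - b x) ^ (p j - 1) * φ₂ j (x, t)) ^ 2 = (∑ i : Fin (Ns + 1), ∑ j : Fin (Ns + 1), (p i : ℝ) * (p j : ℝ) * (h₂ + ζ (x, t) - b x) ^ (p i + p j - 2) * (φ₂ i (x, t) * φ₂ j (x, t))) := by
    rw [sq, Finset.sum_mul_sum]
    exact sum_sum_congr' fun i j => w2_term _ _ _ _ _
  rw [hU1, hW1, hU2, hW2] at hE3
  rw [hPTeq, hDXeq]
  simp only [Finset.sum_add_distrib, Finset.sum_sub_distrib]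
  rw [hP1f, hP3s, hP4f, hP6s, hQ1f, hQ3s, hQ4f, hQ5, hQ6, hQ7f, hQ9s, hR1, hR3, hR2, hR4,
    hY3, hY5]
  linear_combination (-(pt ζ (x, t))) * hE3
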